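/- arXiv:1405.2937 — 6 statements merged into one kernel-verified Lean document; each statement's English description precedes it below -/
import Mathlib

section
/- Let $V$ be a $k$-dimensional vector space with two decreasing exhaustive filtrations $V(-aP)$ and $V(-bQ)$ with vanishing sequences $a_1 \leq \dots \leq a_k$ and $b_1 \leq \dots \leq b_k$ respectively. Then there exists a basis $s_1,\dots,s_k$ of $V$ which is simultaneously adapted, i.e., $\mathrm{ord}_P(s_i) = a_i$ and $\mathrm{ord}_Q(s_i) = b_{k+1-i}$ for all $i$, if and only if for all $a,b \geq 0$ one has $\dim(V(-aP) \cap V(-bQ)) = \#\{i : a_i \geq a \text{ and } b_{k+1-i} \geq b\}$. -/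
/-!
For a basis adapted to both filtrations, each `V(-aP)` is spanned by the basis vectors it
contains, so `V(-aP) ∩ V(-bQ)` is spanned by the `s_i` with `a_i ≥ a` and `b_{k+1-i} ≥ b`.

Conversely, write `W(a,b) = V(-aP) ∩ V(-bQ)` and `U(a,b) = W(a+1,b) + W(a,b+1)`. Since
`W(a+1,b) ∩ W(a,b+1) = W(a+1,b+1)`, inclusion–exclusion turns the dimension condition into
`dim W(a,b) - dim U(a,b) = #{i : (a_i, b_{k+1-i}) = (a,b)}`. Choosing a basis of a complement of
`U(a,b)` in `W(a,b)` for every `(a,b)` gives vectors of exact orders `(a_i, b_{k+1-i})`, and a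
downward induction on `(a,b)` shows that they span every `W(a,b)`, in particular `V = W(0,0)`,
whose dimension is `k`.
-/

open Module Submodule Finset

section Basis

variable {ι K V : Type*} [Field K] [AddCommGroup V] [Module K V]

theorem Module.Basis.finrank_span_image (s : Basis ι K V) (S : Finset ι) :
    finrank K (span K (s '' S)) = #S := by
  rw [Set.image_eq_range]
  exact (finrank_span_eq_card (s.linearIndependent.comp _ Subtype.val_injective)).trans
    (Fintype.card_coe S)

theorem Module.Basis.span_image_eq_of_finrank_le [FiniteDimensional K V] (s : Basis ι K V)
    {S : Finset ι} {W : Submodule K V} (hS : ∀ i ∈ S, s i ∈ W) (hW : finrank K W ≤ #S) :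
    span K (s '' S) = W :=
  eq_of_le_of_finrank_le (span_le.mpr (Set.image_subset_iff.mpr hS))
    (by rwa [s.finrank_span_image])

theorem Module.Basis.span_image_inf_span_image (s : Basis ι K V) (A B : Set ι) :
    span K (s '' A) ⊓ span K (s '' B) = span K (s '' (A ∩ B)) := by
  ext x
  simp only [Submodule.mem_inf, s.mem_span_image, Set.subset_inter_iff]

end Basis

theorem Nat.decreasingInduction₂ {P : ℕ → ℕ → Prop} (N : ℕ)
    (base : ∀ a b, N ≤ a ∨ N ≤ b → P a b) (step : ∀ a b, P (a + 1) b → P a (b + 1) → P a b)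
    (a b : ℕ) : P a b := by
  suffices ∀ n a b, 2 * N ≤ a + b + n → P a b from this (2 * N) a b (by omega)
  intro n
  induction n with
  | zero => exact fun a b h => base a b (by omega)
  | succ n ih => exact fun a b h => step a b (ih _ _ (by omega)) (ih _ _ (by omega))

section Quadrant

variable {ι : Type*} [Fintype ι]

def quadrant (α β : ι → ℕ) (a b : ℕ) : Finset ι := {i | a ≤ α i ∧ b ≤ β i}

theorem card_quadrant_add_card_quadrant_succ (α β : ι → ℕ) (a b : ℕ) :
    #(quadrant α β a b) + #(quadrant α β (a + 1) (b + 1)) =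
      #(quadrant α β (a + 1) b) + #(quadrant α β a (b + 1)) + #{i | α i = a ∧ β i = b} := by
  simp only [quadrant, card_filter, ← sum_add_distrib]
  refine sum_congr rfl fun i _ => ?_
  split_ifs <;> omega

theorem coe_quadrant_eq_union (α β : ι → ℕ) (a b : ℕ) :
    (quadrant α β a b : Set ι) =
      (quadrant α β (a + 1) b : Set ι) ∪ quadrant α β a (b + 1) ∪ {i | α i = a ∧ β i = b} := by
  ext i
  simp only [quadrant, coe_filter, mem_univ, true_and, Set.mem_ofPred_eq, Set.mem_union]
  omega

end Quadrant

section Filtration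

variable {ι K V : Type*} [Fintype ι] [Field K] [AddCommGroup V] [Module K V]
  [FiniteDimensional K V] {F G : ℕ → Submodule K V} {α β : ι → ℕ}

theorem eq_span_image_of_card_eq_finrank (hF : Antitone F)
    (hα : ∀ m, #{i | m ≤ α i} = finrank K (F m)) (s : Basis ι K V) (hs : ∀ i, s i ∈ F (α i))
    (m : ℕ) : F m = span K (s '' ↑({i | m ≤ α i} : Finset ι)) :=
  (s.span_image_eq_of_finrank_le (fun i hi => hF (mem_filter.mp hi).2 (hs i)) (hα m).ge).symm

theorem finrank_inf_eq_card_quadrant (hF : Antitone F) (hG : Antitone G)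
    (hα : ∀ m, #{i | m ≤ α i} = finrank K (F m)) (hβ : ∀ m, #{i | m ≤ β i} = finrank K (G m))
    (s : Basis ι K V) (hsF : ∀ i, s i ∈ F (α i)) (hsG : ∀ i, s i ∈ G (β i)) (a b : ℕ) :
    finrank K ↥(F a ⊓ G b) = #(quadrant α β a b) := by
  have hquadrant : ↑({i | a ≤ α i} : Finset ι) ∩ ↑({i | b ≤ β i} : Finset ι) =
      (quadrant α β a b : Set ι) := by
    ext i
    simp [quadrant]
  rw [eq_span_image_of_card_eq_finrank hF hα s hsF, eq_span_image_of_card_eq_finrank hG hβ s hsG,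
    s.span_image_inf_span_image, hquadrant, s.finrank_span_image]

end Filtration

section Family

variable {ι κ K V : Type*} [Fintype ι] [DecidableEq κ] [Field K] [AddCommGroup V] [Module K V]
  [FiniteDimensional K V]

theorem exists_family_span_image_fiber (c : ι → κ) (D : κ → Submodule K V)
    (hD : ∀ p, finrank K (D p) = #{i | c i = p}) :
    ∃ s : ι → V, (∀ i, s i ∈ D (c i)) ∧ (∀ i, s i ≠ 0) ∧
      ∀ p, span K (s '' {i | c i = p}) = D p := by
  have hcard : ∀ p, Fintype.card {i // c i = p} = finrank K (D p) := fun p => by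
    rw [Fintype.card_subtype, hD]
  let t : ∀ p, Basis {i // c i = p} K (D p) := fun p =>
    (finBasis K (D p)).reindex (Fintype.equivFinOfCardEq (hcard p)).symm
  refine ⟨fun i => t (c i) ⟨i, rfl⟩, fun i => (t _ _).2,
    fun i h => (t (c i)).ne_zero ⟨i, rfl⟩ (Subtype.ext h), fun p => ?_⟩
  have hrange : (fun i => (t (c i) ⟨i, rfl⟩ : V)) '' {i | c i = p} =
      (D p).subtype '' Set.range (t p) := by
    ext x
    constructor
    · rintro ⟨i, rfl, rfl⟩
      exact ⟨_, ⟨⟨i, rfl⟩, rfl⟩, rfl⟩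
    · rintro ⟨_, ⟨⟨i, rfl⟩, rfl⟩, rfl⟩
      exact ⟨i, rfl, rfl⟩
  rw [hrange, ← map_span, (t p).span_eq, map_subtype_top]

end Family

section Bifiltration

variable {ι K V : Type*} [Fintype ι] [Field K] [AddCommGroup V] [Module K V]
  {F G : ℕ → Submodule K V} {α β : ι → ℕ}

def deeperSum (F G : ℕ → Submodule K V) (a b : ℕ) : Submodule K V :=
  F (a + 1) ⊓ G b ⊔ F a ⊓ G (b + 1)

theorem deeperSum_le (hF : Antitone F) (hG : Antitone G) (a b : ℕ) :
    deeperSum F G a b ≤ F a ⊓ G b :=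
  sup_le (inf_le_inf_right _ (hF a.le_succ)) (inf_le_inf_left _ (hG b.le_succ))

theorem finrank_deeperSum_add [FiniteDimensional K V] (hF : Antitone F) (hG : Antitone G)
    (a b : ℕ) :
    finrank K (deeperSum F G a b) + finrank K ↥(F (a + 1) ⊓ G (b + 1)) =
      finrank K ↥(F (a + 1) ⊓ G b) + finrank K ↥(F a ⊓ G (b + 1)) := by
  have hinf : F (a + 1) ⊓ G b ⊓ (F a ⊓ G (b + 1)) = F (a + 1) ⊓ G (b + 1) := by
    rw [inf_inf_inf_comm, inf_eq_left.mpr (hF a.le_succ), inf_eq_right.mpr (hG b.le_succ)]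
  rw [deeperSum, ← hinf, finrank_sup_add_finrank_inf_eq]

variable (hdim : ∀ a b, finrank K ↥(F a ⊓ G b) = #(quadrant α β a b))
include hdim

theorem exists_disjoint_deeperSum_sup_eq [FiniteDimensional K V] (hF : Antitone F)
    (hG : Antitone G) (a b : ℕ) :
    ∃ D, Disjoint (deeperSum F G a b) D ∧ deeperSum F G a b ⊔ D = F a ⊓ G b ∧
      finrank K D = #{i | α i = a ∧ β i = b} := by
  obtain ⟨D, hdisj, hsup⟩ :=
    IsModularLattice.exists_disjoint_and_sup_eq (deeperSum_le hF hG a b)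
  have hrank := finrank_sup_add_finrank_inf_eq (deeperSum F G a b) D
  rw [hsup, hdisj.eq_bot, finrank_bot] at hrank
  have hfinrank := finrank_deeperSum_add hF hG a b
  have hcard := card_quadrant_add_card_quadrant_succ α β a b
  simp only [hdim] at *
  exact ⟨D, hdisj, hsup, by omega⟩

theorem span_image_quadrant_eq [FiniteDimensional K V] (s : ι → V) (D : ℕ → ℕ → Submodule K V)
    (hD : ∀ a b, deeperSum F G a b ⊔ D a b = F a ⊓ G b)
    (hs : ∀ a b, span K (s '' {i | α i = a ∧ β i = b}) = D a b) (a b : ℕ) :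
    span K (s '' quadrant α β a b) = F a ⊓ G b := by
  obtain ⟨N, hN⟩ := Finite.exists_le fun i => max (α i) (β i)
  induction a, b using Nat.decreasingInduction₂ (N + 1) with
  | base a b hab =>
    have hempty : quadrant α β a b = ∅ := by
      ext i
      simp only [quadrant, mem_filter, mem_univ, true_and, notMem_empty, iff_false]
      have := hN i
      omega
    rw [hempty, coe_empty, Set.image_empty, span_empty, eq_comm, ← finrank_eq_zero, hdim, hempty,
      card_empty]
  | step a b h₁ h₂ =>
    rw [coe_quadrant_eq_union, Set.image_union, Set.image_union, span_union, span_union, h₁, h₂,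
      hs, ← hD a b]
    rfl

theorem exists_adapted_basis_of_finrank_inf_eq [FiniteDimensional K V] (hF : Antitone F)
    (hG : Antitone G) (hF0 : F 0 = ⊤) (hG0 : G 0 = ⊤) :
    ∃ s : Basis ι K V, ∀ i, (s i ∈ F (α i) ∧ s i ∉ F (α i + 1)) ∧
      (s i ∈ G (β i) ∧ s i ∉ G (β i + 1)) := by
  choose D hdisj hsup hDrank using exists_disjoint_deeperSum_sup_eq hdim hF hG
  obtain ⟨s, hsD, hs0, hspan⟩ := exists_family_span_image_fiber (fun i => (α i, β i))
    (fun p => D p.1 p.2) (fun p => by simpa [Prod.ext_iff] using hDrank p.1 p.2)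
  have htop : span K (Set.range s) = ⊤ := by
    simpa [quadrant, hF0, hG0] using span_image_quadrant_eq hdim s D hsup
      (fun a b => by simpa [Prod.ext_iff] using hspan (a, b)) 0 0
  have hcard : Fintype.card ι = finrank K V :=
    calc Fintype.card ι = #(quadrant α β 0 0) := by simp [quadrant]
      _ = finrank K ↥(F 0 ⊓ G 0) := (hdim 0 0).symm
      _ = finrank K V := by rw [hF0, hG0, inf_idem, finrank_top]
  refine ⟨basisOfTopLeSpanOfCardEqFinrank s htop.ge hcard, fun i => ?_⟩
  rw [coe_basisOfTopLeSpanOfCardEqFinrank]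
  have hW : s i ∈ F (α i) ⊓ G (β i) := hsup _ _ ▸ mem_sup_right (hsD i)
  have hU : s i ∉ deeperSum F G (α i) (β i) := fun h =>
    hs0 i (disjoint_def.mp (hdisj _ _) _ h (hsD i))
  exact ⟨⟨hW.1, fun h => hU (mem_sup_left ⟨h, hW.2⟩)⟩,
    ⟨hW.2, fun h => hU (mem_sup_right ⟨hW.1, h⟩)⟩⟩

end Bifiltration

theorem stmt_3_general (K V : Type*) [Field K] [AddCommGroup V] [Module K V]
    [FiniteDimensional K V]
    (k : ℕ)
    (FP FQ : ℕ → Submodule K V)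
    (hP0 : FP 0 = ⊤) (hQ0 : FQ 0 = ⊤)
    (hPmono : Antitone FP) (hQmono : Antitone FQ)
    (aseq bseq : Fin k → ℕ)
    (haseq : ∀ m : ℕ, (Finset.univ.filter fun i : Fin k => m ≤ aseq i).card
        = Module.finrank K (FP m))
    (hbseq : ∀ m : ℕ, (Finset.univ.filter fun i : Fin k => m ≤ bseq i).card
        = Module.finrank K (FQ m)) :
    (∃ s : Module.Basis (Fin k) K V, ∀ i : Fin k,
        (s i ∈ FP (aseq i) ∧ s i ∉ FP (aseq i + 1)) ∧
        (s i ∈ FQ (bseq i.rev) ∧ s i ∉ FQ (bseq i.rev + 1))) ↔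
    (∀ a b : ℕ,
      Module.finrank K ↥(FP a ⊓ FQ b)
        = (Finset.univ.filter fun i : Fin k => a ≤ aseq i ∧ b ≤ bseq i.rev).card) := by
  have hbseq_rev : ∀ m, #{i : Fin k | m ≤ bseq i.rev} = finrank K (FQ m) := fun m =>
    (card_equiv Fin.revPerm (by simp)).trans (hbseq m)
  constructor
  · rintro ⟨s, hs⟩
    exact finrank_inf_eq_card_quadrant hPmono hQmono haseq hbseq_rev s (fun i => (hs i).1.1)
      (fun i => (hs i).2.1)
  · intro hdim
    exact exists_adapted_basis_of_finrank_inf_eq hdim hPmono hQmono hP0 hQ0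

/-- Proposition `adapted`: a `k`-dimensional vector space with
two decreasing exhaustive filtrations admits a simultaneously adapted basis
(`ord_P(s_i) = a_i` and `ord_Q(s_i) = b_{k+1-i}`) if and only if for all `a, b`,
`dim (V(-aP) ⊓ V(-bQ)) = #{i : a_i ≥ a and b_{k+1-i} ≥ b}`. -/
theorem stmt_3 (K V : Type*) [Field K] [AddCommGroup V] [Module K V]
    [FiniteDimensional K V]
    (k : ℕ) (hk : Module.finrank K V = k)
    (FP FQ : ℕ → Submodule K V)
    (hP0 : FP 0 = ⊤) (hQ0 : FQ 0 = ⊤)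
    (hPmono : Antitone FP) (hQmono : Antitone FQ)
    (hPbot : ∃ N, FP N = ⊥) (hQbot : ∃ N, FQ N = ⊥)
    (aseq bseq : Fin k → ℕ) (haseqmono : Monotone aseq) (hbseqmono : Monotone bseq)
    (haseq : ∀ m : ℕ, (Finset.univ.filter fun i : Fin k => m ≤ aseq i).card
        = Module.finrank K (FP m))
    (hbseq : ∀ m : ℕ, (Finset.univ.filter fun i : Fin k => m ≤ bseq i).card
        = Module.finrank K (FQ m)) :
    (∃ s : Module.Basis (Fin k) K V, ∀ i : Fin k,
        (s i ∈ FP (aseq i) ∧ s i ∉ FP (aseq i + 1)) ∧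
        (s i ∈ FQ (bseq i.rev) ∧ s i ∉ FQ (bseq i.rev + 1))) ↔
    (∀ a b : ℕ,
      Module.finrank K ↥(FP a ⊓ FQ b)
        = (Finset.univ.filter fun i : Fin k => a ≤ aseq i ∧ b ≤ bseq i.rev).card) :=
  stmt_3_general K V k FP FQ hP0 hQ0 hPmono hQmono aseq bseq haseq hbseq
end

section
/- Let $\Gamma$ be a finite tree, $r \geq 1$, and for each vertex $v$ let $T_v \in \mathbb{Z}^{V(\Gamma)}$ be the vector that is $-\ell_v r$ in coordinate $v$ (where $\ell_v$ is the valence of $v$), $r$ in each coordinate adjacent to $v$, and $0$ elsewhere. Then a path $P(w,v_1,\dots,v_m)$ (endpoint $w + \sum_i T_{v_i}$) is minimal among all paths from $w$ to its endpoint if and only if not every vertex of $\Gamma$ occurs among $v_1,\dots,v_m$; moreover in this case the multiset $\{v_1,\dots,v_m\}$ is uniquely determined by the endpoint, so the path is unique up to reordering. -/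
/-!
Up to the factor `-r`, `T_v` is the `v`-th column of the graph Laplacian `L` over `ℤ`, so a
path ends at `w - r • L c`, where `c v` counts the occurrences of `v` in the path. On a
connected graph the kernel of `L` consists of the constant functions, hence two paths from `w`
share their endpoint iff their count vectors differ by a constant `k`, and then their lengths
differ by `k • |V|`. Removing one copy of every vertex thus shortens a path that uses all
vertices, whereas if some vertex is missing from the path, `k ≤ 0` for every competitor; for
paths of equal length `k = 0`, i.e. the counts agree.
-/

open SimpleGraph

/-- The translation vector `T_v ∈ ℤ^{V(Γ)}`: entry `-ℓ_v r` at `v` (`ℓ_v` the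
valence of `v`), entry `r` at each neighbor of `v`, and `0` elsewhere. -/
def Tvec {V : Type*} [Fintype V] [DecidableEq V] (G : SimpleGraph V)
    [DecidableRel G.Adj] (r : ℕ) (v : V) : V → ℤ :=
  fun u => if u = v then -(G.degree v * r : ℤ) else if G.Adj v u then (r : ℤ) else 0

open Finset Matrix

theorem SimpleGraph.lapMatrix_int_mulVec_eq_zero_iff_forall_reachable {V : Type*}
    [Fintype V] [DecidableEq V] (G : SimpleGraph V) [DecidableRel G.Adj] {x : V → ℤ} :
    G.lapMatrix ℤ *ᵥ x = 0 ↔ ∀ i j : V, G.Reachable i j → x i = x j := by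
  have hcast : G.lapMatrix ℝ *ᵥ (Int.cast ∘ x) = Int.cast ∘ (G.lapMatrix ℤ *ᵥ x) := by
    ext v
    simp [lapMatrix_mulVec_apply]
  rw [← (Int.cast_injective (α := ℝ)).comp_left.eq_iff, ← hcast, Pi.comp_zero, Int.cast_zero,
    Function.const_zero, lapMatrix_mulVec_eq_zero_iff_forall_reachable]
  simp

theorem List.sum_map_eq_sum_count_smul {α M : Type*} [Fintype α] [DecidableEq α]
    [AddCommMonoid M] (l : List α) (f : α → M) :
    (l.map f).sum = ∑ a, l.count a • f a := by
  rw [sum_list_map_count]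
  refine sum_subset (subset_univ _) fun a _ ha => ?_
  rw [List.count_eq_zero.mpr (by simpa using ha), zero_smul]

section Tvec

variable {V : Type*} [Fintype V] [DecidableEq V] {G : SimpleGraph V} [DecidableRel G.Adj]
  {r : ℕ}

theorem Tvec_apply (v u : V) : Tvec G r v u = -(r * G.lapMatrix ℤ u v) := by
  by_cases huv : u = v
  · subst huv
    simp [Tvec, lapMatrix, degMatrix, mul_comm]
  · simp [Tvec, lapMatrix, degMatrix, huv, G.adj_comm u v]

theorem sum_map_Tvec (l : List V) :
    (l.map (Tvec G r)).sum = -(r : ℤ) • (G.lapMatrix ℤ *ᵥ fun v => (l.count v : ℤ)) := by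
  ext u
  simp only [List.sum_map_eq_sum_count_smul, Finset.sum_apply, Pi.smul_apply, Tvec_apply,
    mulVec, dotProduct, mul_sum, smul_eq_mul]
  refine sum_congr rfl fun v _ => ?_
  ring

theorem sum_map_Tvec_eq_iff (hG : G.Connected) (hr : r ≠ 0) (l l' : List V) :
    (l.map (Tvec G r)).sum = (l'.map (Tvec G r)).sum ↔
      ∃ k : ℤ, ∀ v, (l.count v : ℤ) = l'.count v + k := by
  obtain ⟨v₀⟩ := hG.nonempty
  have hr' : -(r : ℤ) ≠ 0 := by simpa using hr
  rw [sum_map_Tvec, sum_map_Tvec, smul_right_inj hr', ← sub_eq_zero, ← mulVec_sub,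
    G.lapMatrix_int_mulVec_eq_zero_iff_forall_reachable]
  constructor
  · intro h
    refine ⟨l.count v₀ - l'.count v₀, fun v => ?_⟩
    have := h v v₀ (hG.preconnected v v₀)
    simp only [Pi.sub_apply] at this
    linarith
  · rintro ⟨k, hk⟩ i j -
    simp [hk]

theorem length_eq_length_add_card_mul {l l' : List V} {k : ℤ}
    (h : ∀ v, (l.count v : ℤ) = l'.count v + k) :
    (l.length : ℤ) = l'.length + Fintype.card V * k := by
  have hlen (m : List V) : (m.length : ℤ) = ∑ v, (m.count v : ℤ) := by
    simpa using congrArg ((↑) : ℕ → ℤ) (m.sum_map_eq_sum_count_smul fun _ => 1)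
  simp [hlen, h, sum_add_distrib, card_univ]

theorem exists_shorter_of_forall_mem (hG : G.Connected) (hr : r ≠ 0) {l : List V}
    (hl : ∀ v, v ∈ l) :
    ∃ l' : List V, (l'.map (Tvec G r)).sum = (l.map (Tvec G r)).sum ∧ l'.length < l.length := by
  set l' := l.diff univ.toList
  have hcount (v : V) : (l.count v : ℤ) = l'.count v + 1 := by
    have hv : univ.toList.count v = 1 :=
      List.count_eq_one_of_mem (nodup_toList _) (by simp)
    have := List.count_pos_iff.mpr (hl v)
    rw [List.count_diff, hv]
    omega
  refine ⟨l', ((sum_map_Tvec_eq_iff hG hr l l').mpr ⟨1, hcount⟩).symm, ?_⟩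
  have := length_eq_length_add_card_mul hcount
  have : 0 < Fintype.card V := Fintype.card_pos_iff.mpr hG.nonempty
  omega

theorem length_le_of_notMem (hG : G.Connected) (hr : r ≠ 0) {l l' : List V} {v : V}
    (hv : v ∉ l) (h : (l'.map (Tvec G r)).sum = (l.map (Tvec G r)).sum) :
    l.length ≤ l'.length := by
  obtain ⟨k, hk⟩ := (sum_map_Tvec_eq_iff hG hr l l').mp h.symm
  have hk_nonpos : k ≤ 0 := by
    have := hk v
    rw [List.count_eq_zero.mpr hv] at this
    omega
  have := length_eq_length_add_card_mul hk
  have : (Fintype.card V : ℤ) * k ≤ 0 :=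
    mul_nonpos_of_nonneg_of_nonpos (by positivity) hk_nonpos
  omega

theorem coe_eq_of_sum_map_Tvec_eq (hG : G.Connected) (hr : r ≠ 0) {l l' : List V}
    (h : (l'.map (Tvec G r)).sum = (l.map (Tvec G r)).sum) (hlen : l'.length = l.length) :
    (l : Multiset V) = l' := by
  obtain ⟨k, hk⟩ := (sum_map_Tvec_eq_iff hG hr l l').mp h.symm
  have hk0 : k = 0 := by
    have := hG.nonempty
    have hcard : (Fintype.card V : ℤ) ≠ 0 := by simp
    have := length_eq_length_add_card_mul hk
    rw [hlen] at this
    exact (mul_eq_zero.mp (by linarith)).resolve_left hcard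
  ext v
  simpa [hk0] using hk v

end Tvec

theorem stmt_5_general {V : Type*} [Fintype V] [DecidableEq V] (G : SimpleGraph V)
    [DecidableRel G.Adj] (hG : G.IsTree) (r : ℕ) (hr : 0 < r)
    (l : List V) :
    ((∀ l' : List V, (l'.map (Tvec G r)).sum = (l.map (Tvec G r)).sum →
        l.length ≤ l'.length) ↔ ∃ v : V, v ∉ l) ∧
    ((∀ l' : List V, (l'.map (Tvec G r)).sum = (l.map (Tvec G r)).sum →
        l.length ≤ l'.length) →
      ∀ l' : List V, (l'.map (Tvec G r)).sum = (l.map (Tvec G r)).sum →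
        l'.length = l.length → (l : Multiset V) = (l' : Multiset V)) := by
  have hG := hG.connected
  refine ⟨⟨fun hmin => ?_, fun ⟨v, hv⟩ l' h => length_le_of_notMem hG hr.ne' hv h⟩,
    fun _ l' h hlen => coe_eq_of_sum_map_Tvec_eq hG hr.ne' h hlen⟩
  by_contra! hl
  obtain ⟨l', h, hlt⟩ := exists_shorter_of_forall_mem hG hr.ne' hl
  exact (hmin l' h).not_gt hlt

/-- Proposition `min-paths`, type II case: a path
`P(w, v₁,…,v_m)` (with endpoint `w + ∑ T_{v_i}`) is minimal among paths from `w`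
to its endpoint if and only if not every vertex of `Γ` occurs among the `v_i`;
moreover a minimal path is unique up to reordering: any path with the same
endpoint and the same length has the same underlying multiset of vertices. -/
theorem stmt_5 {V : Type*} [Fintype V] [DecidableEq V] (G : SimpleGraph V)
    [DecidableRel G.Adj] (hG : G.IsTree) (r : ℕ) (hr : 0 < r)
    (w : V → ℤ) (l : List V) :
    ((∀ l' : List V, (l'.map (Tvec G r)).sum = (l.map (Tvec G r)).sum →
        l.length ≤ l'.length) ↔ ∃ v : V, v ∉ l) ∧
    ((∀ l' : List V, (l'.map (Tvec G r)).sum = (l.map (Tvec G r)).sum →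
        l.length ≤ l'.length) →
      ∀ l' : List V, (l'.map (Tvec G r)).sum = (l.map (Tvec G r)).sum →
        l'.length = l.length → (l : Multiset V) = (l' : Multiset V)) :=
  stmt_5_general G hG r hr l
end

section
/- Let $A$ be a commutative Noetherian local ring and $f: A^m \to A^n$ a map of finite free modules. Suppose that all $(m+1-k)\times(m+1-k)$ minors of $f$ vanish (the $k$-th vanishing locus is everything) and that the ideal of $(m-k)\times(m-k)$ minors is the unit ideal (the $(k+1)$-st vanishing locus is empty). Then the kernel of $f$ is a free direct summand of $A^m$ of rank $k$, and its formation commutes with arbitrary base change $A \to B$: the kernel of $f \otimes_A B$ equals $(\ker f) \otimes_A B$. -/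
/-!
Choose an `r × r` minor `Q = M[I, J]` that is a unit (`r = m - k`; it exists because `A` is
local). For any row `j` and column `c`, the bordered `(r + 1)`-minor equals
`det Q * (M j c - M[j, J] Q⁻¹ M[I, c])` by the Schur complement formula, so its vanishing gives
the rank factorisation `M = M[·, J] Q⁻¹ M[I, ·]`. Hence `ker M = ker M[I, ·]`, and as `M[I, ·]`
contains the invertible block `Q`, its kernel is the graph of `-Q⁻¹ M[I, J']` over the
complementary coordinates `J'`: the column space of a matrix `S` with `M[I, ·] S = 0` and
`S[J', ·] = 1`. These two identities, the unit minor and the vanishing minors all survive any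
ring map `A → B`, so the same `S` computes the kernel after base change.
-/

/-- The ideal generated by all `s × s` minors of a matrix. -/
def minorsIdeal {A : Type*} [CommRing A] {n m : ℕ}
    (M : Matrix (Fin n) (Fin m) A) (s : ℕ) : Ideal A :=
  Ideal.span { x | ∃ (ri : Fin s → Fin n) (ci : Fin s → Fin m),
    Function.Injective ri ∧ Function.Injective ci ∧ x = (M.submatrix ri ci).det }

open Matrix

namespace Matrix

variable {m n ι κ : Type*}

theorem submatrix_id_equiv_eq_fromCols {α : Type*} (N : Matrix m n α) (e : ι ⊕ κ ≃ n) :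
    N.submatrix id e = fromCols (N.submatrix id (e ∘ Sum.inl)) (N.submatrix id (e ∘ Sum.inr)) := by
  ext i (s | s) <;> rfl

variable {R : Type*} [CommRing R]

theorem det_map_submatrix {R' : Type*} [CommRing R'] [Fintype ι] [DecidableEq ι] (φ : R →+* R')
    (M : Matrix m n R) (ri : ι → m) (ci : ι → n) :
    ((M.map φ).submatrix ri ci).det = φ (M.submatrix ri ci).det := by
  rw [RingHom.map_det]
  rfl

variable [Fintype ι] [DecidableEq ι]

theorem exists_mul_eq_zero_of_isUnit_det [Fintype n] [Fintype κ] [DecidableEq κ]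
    (N : Matrix ι n R) (e : ι ⊕ κ ≃ n) (hQ : IsUnit (N.submatrix id (e ∘ Sum.inl)).det) :
    ∃ S : Matrix n κ R, N * S = 0 ∧ S.submatrix (e ∘ Sum.inr) id = 1 := by
  set Q := N.submatrix id (e ∘ Sum.inl)
  set T := N.submatrix id (e ∘ Sum.inr)
  refine ⟨(fromRows (-(Q⁻¹ * T)) 1).submatrix e.symm id, ?_, ?_⟩
  · have hN : N = (fromCols Q T).submatrix id e.symm := by
      rw [← submatrix_id_equiv_eq_fromCols, submatrix_submatrix]
      simp
    rw [hN, submatrix_mul_equiv, fromCols_mul_fromRows, Matrix.mul_neg, ← Matrix.mul_assoc,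
      mul_nonsing_inv _ hQ, Matrix.one_mul, Matrix.mul_one, neg_add_cancel, submatrix_zero]
    rfl
  · ext j j'
    simp

theorem ker_mulVecLin_eq_range_of_isUnit_det [Fintype n] [Fintype κ] [DecidableEq κ]
    (N : Matrix ι n R) (e : ι ⊕ κ ≃ n) (hQ : IsUnit (N.submatrix id (e ∘ Sum.inl)).det)
    (S : Matrix n κ R) (hNS : N * S = 0) (hS : S.submatrix (e ∘ Sum.inr) id = 1) :
    LinearMap.ker N.mulVecLin = LinearMap.range S.mulVecLin := by
  refine le_antisymm (fun x hx => ?_) (LinearMap.range_le_ker_iff.mpr ?_)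
  · set z := x - S *ᵥ (x ∘ e ∘ Sum.inr) with hz
    have hNz : N *ᵥ z = 0 := by
      rw [LinearMap.mem_ker, mulVecLin_apply] at hx
      rw [hz, mulVec_sub, mulVec_mulVec, hNS, zero_mulVec, hx, sub_zero]
    have hz_inr : z ∘ e ∘ Sum.inr = 0 := by
      have hSx : (S *ᵥ (x ∘ e ∘ Sum.inr)) ∘ e ∘ Sum.inr = x ∘ e ∘ Sum.inr := by
        conv_rhs => rw [← one_mulVec (x ∘ e ∘ Sum.inr), ← hS]
        rfl
      ext j
      exact sub_eq_zero.mpr (congrFun hSx j).symm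
    have hz_inl : z ∘ e ∘ Sum.inl = 0 := by
      have hQz : N.submatrix id (e ∘ Sum.inl) *ᵥ (z ∘ e ∘ Sum.inl) = 0 := by
        have hze : z ∘ e = Sum.elim (z ∘ e ∘ Sum.inl) (z ∘ e ∘ Sum.inr) := by
          ext (s | s) <;> rfl
        rw [← hNz, ← add_zero (_ *ᵥ _), ← mulVec_zero (N.submatrix id (e ∘ Sum.inr)), ← hz_inr,
          ← fromCols_mulVec_sumElim, ← hze, ← submatrix_id_equiv_eq_fromCols,
          submatrix_mulVec_equiv]
        simp [Function.comp_assoc]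
      rw [← one_mulVec (z ∘ e ∘ Sum.inl), ← nonsing_inv_mul _ hQ, ← mulVec_mulVec, hQz,
        mulVec_zero]
    have hz0 : z = 0 := by
      ext c
      obtain ⟨s | s, rfl⟩ := e.surjective c
      · exact congrFun hz_inl s
      · exact congrFun hz_inr s
    exact ⟨x ∘ e ∘ Sum.inr, (sub_eq_zero.mp hz0).symm⟩
  · rw [← mulVecLin_mul, hNS, mulVecLin_zero]

theorem eq_mul_inv_mul_of_isUnit_det_submatrix (M : Matrix m n R) (ri : ι → m) (ci : ι → n)
    (hQ : IsUnit (M.submatrix ri ci).det)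
    (hmin : ∀ j c, (M.submatrix (Sum.elim ri fun _ : Unit => j)
      (Sum.elim ci fun _ : Unit => c)).det = 0) :
    M = M.submatrix id ci * (M.submatrix ri ci)⁻¹ * M.submatrix ri id := by
  let := (M.submatrix ri ci).invertibleOfIsUnitDet hQ
  ext j c
  have hblocks : M.submatrix (Sum.elim ri fun _ : Unit => j) (Sum.elim ci fun _ : Unit => c)
      = fromBlocks (M.submatrix ri ci) (M.submatrix ri fun _ => c)
          (M.submatrix (fun _ => j) ci) (M.submatrix (fun _ => j) fun _ => c) := by
    ext (_ | _) (_ | _) <;> rfl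
  have hschur := hmin j c
  rw [hblocks, det_fromBlocks₁₁, hQ.mul_right_eq_zero, det_unique, invOf_eq_nonsing_inv,
    sub_apply, sub_eq_zero] at hschur
  exact hschur

theorem ker_mulVecLin_eq_range_of_det_submatrix_eq_zero [Fintype n] [Fintype κ] [DecidableEq κ]
    (M : Matrix m n R) (ri : ι → m) (e : ι ⊕ κ ≃ n)
    (hQ : IsUnit (M.submatrix ri (e ∘ Sum.inl)).det)
    (hmin : ∀ j c, (M.submatrix (Sum.elim ri fun _ : Unit => j)
      (Sum.elim (e ∘ Sum.inl) fun _ : Unit => c)).det = 0)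
    (S : Matrix n κ R) (hNS : M.submatrix ri id * S = 0) (hS : S.submatrix (e ∘ Sum.inr) id = 1) :
    LinearMap.ker M.mulVecLin = LinearMap.range S.mulVecLin := by
  rw [← ker_mulVecLin_eq_range_of_isUnit_det (M.submatrix ri id) e hQ S hNS hS]
  ext x
  simp only [LinearMap.mem_ker, mulVecLin_apply]
  refine ⟨fun hx => funext fun i => congrFun hx (ri i), fun hx => ?_⟩
  rw [eq_mul_inv_mul_of_isUnit_det_submatrix M ri _ hQ hmin, ← mulVec_mulVec, hx, mulVec_zero]

end Matrix

theorem Function.Injective.exists_sumEquiv_comp_inl {α β γ : Type*} [Fintype α] [Fintype β]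
    [Fintype γ] {f : α → γ} (hf : Function.Injective f)
    (h : Fintype.card α + Fintype.card β = Fintype.card γ) :
    ∃ e : α ⊕ β ≃ γ, e ∘ Sum.inl = f := by
  classical
  have hcard : Fintype.card {c // c ∉ Set.range f} = Fintype.card β := by
    rw [Fintype.card_subtype_compl, Set.card_range_of_injective hf]
    omega
  refine ⟨(Equiv.sumCongr (Equiv.ofInjective f hf) (Fintype.equivOfCardEq hcard).symm).trans
    (Equiv.sumCompl (· ∈ Set.range f)), ?_⟩
  ext a
  simp

section minorsIdeal

variable {A : Type*} [CommRing A] {n m : ℕ} (M : Matrix (Fin n) (Fin m) A)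

theorem minorsIdeal_zero : minorsIdeal M 0 = ⊤ :=
  (Ideal.eq_top_iff_one _).mpr <| Ideal.subset_span
    ⟨Fin.elim0, Fin.elim0, fun a => a.elim0, fun a => a.elim0, det_fin_zero.symm⟩

theorem det_submatrix_eq_zero_of_minorsIdeal_eq_bot {ι : Type*} [Fintype ι] [DecidableEq ι]
    (h : minorsIdeal M (Fintype.card ι) = ⊥) (ri : ι → Fin n) (ci : ι → Fin m) :
    (M.submatrix ri ci).det = 0 := by
  rw [← det_submatrix_equiv_self (Fintype.equivFin ι).symm, submatrix_submatrix]
  set e := (Fintype.equivFin ι).symm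
  by_cases hr : Function.Injective (ri ∘ e)
  · by_cases hc : Function.Injective (ci ∘ e)
    · have hmem : (M.submatrix (ri ∘ e) (ci ∘ e)).det ∈ minorsIdeal M (Fintype.card ι) :=
        Ideal.subset_span ⟨_, _, hr, hc, rfl⟩
      simpa [h] using hmem
    · obtain ⟨a, b, hab, hne⟩ := Function.not_injective_iff.mp hc
      exact det_zero_of_column_eq hne fun i => congrArg (M _) hab
  · obtain ⟨a, b, hab, hne⟩ := Function.not_injective_iff.mp hr
    exact det_zero_of_row_eq hne (funext fun i => congrArg (M · _) hab)

theorem exists_isUnit_det_submatrix_of_minorsIdeal_eq_top [IsLocalRing A] {s : ℕ}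
    (h : minorsIdeal M s = ⊤) :
    ∃ (ri : Fin s → Fin n) (ci : Fin s → Fin m),
      Function.Injective ci ∧ IsUnit (M.submatrix ri ci).det := by
  by_contra! hcon
  refine (IsLocalRing.maximalIdeal.isMaximal A).ne_top (top_le_iff.mp (h ▸ Ideal.span_le.mpr ?_))
  rintro _ ⟨ri, ci, -, hci, rfl⟩
  exact hcon ri ci hci

end minorsIdeal

theorem stmt_10_general (A : Type) [CommRing A] [IsLocalRing A]
    {n m k : ℕ} (M : Matrix (Fin n) (Fin m) A)
    (h1 : minorsIdeal M (m + 1 - k) = ⊥)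
    (h2 : minorsIdeal M (m - k) = ⊤) :
    ∃ (S : Matrix (Fin m) (Fin k) A) (P : Matrix (Fin k) (Fin m) A),
      P * S = 1 ∧
      ∀ (B : Type) [CommRing B] (φ : A →+* B),
        LinearMap.ker ((M.map φ).mulVecLin) = LinearMap.range ((S.map φ).mulVecLin) := by
  have hkm : k ≤ m := by
    by_contra! hkm
    rw [Nat.sub_eq_zero_of_le hkm, minorsIdeal_zero] at h1
    exact top_ne_bot h1
  obtain ⟨ri, ci, hci, hQ⟩ := exists_isUnit_det_submatrix_of_minorsIdeal_eq_top M h2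
  obtain ⟨e, rfl⟩ := hci.exists_sumEquiv_comp_inl (β := Fin k) (by simp; omega)
  obtain ⟨S, hNS, hS⟩ := (M.submatrix ri id).exists_mul_eq_zero_of_isUnit_det e hQ
  have hmin := det_submatrix_eq_zero_of_minorsIdeal_eq_bot M (ι := Fin (m - k) ⊕ Unit)
    (by rwa [Fintype.card_sum, Fintype.card_fin, Fintype.card_unit, ← Nat.sub_add_comm hkm])
  refine ⟨S, (1 : Matrix (Fin m) (Fin m) A).submatrix (e ∘ Sum.inr) id, ?_, fun B _ φ => ?_⟩
  · rw [← hS]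
    ext i j
    simp [Matrix.mul_apply, Matrix.one_apply]
  refine (M.map φ).ker_mulVecLin_eq_range_of_det_submatrix_eq_zero ri e ?_ (fun j c => ?_)
    (S.map φ) ?_ ?_
  · rw [det_map_submatrix]
    exact hQ.map φ
  · rw [det_map_submatrix, hmin, map_zero]
  · rw [submatrix_map, ← Matrix.map_mul, hNS, Matrix.map_zero _ (map_zero φ)]
  · rw [submatrix_map, hS, Matrix.map_one _ (map_zero φ) (map_one φ)]

/-- second part of Proposition `pushforward-detl-subbundles`,
classical setting: over a Noetherian local ring, if all `(m+1-k)`-minors of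
`f : A^m → A^n` vanish and the `(m-k)`-minors generate the unit ideal, then the
kernel of `f` is a free rank-`k` direct summand of `A^m` (given by a split
injection `S` with retraction `P`), and its formation commutes with arbitrary
base change `A → B`: the kernel of `f ⊗ B` is the image of `S ⊗ B`. -/
theorem stmt_10 (A : Type) [CommRing A] [IsNoetherianRing A] [IsLocalRing A]
    {n m k : ℕ} (M : Matrix (Fin n) (Fin m) A)
    (h1 : minorsIdeal M (m + 1 - k) = ⊥)
    (h2 : minorsIdeal M (m - k) = ⊤) :
    ∃ (S : Matrix (Fin m) (Fin k) A) (P : Matrix (Fin k) (Fin m) A),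
      P * S = 1 ∧
      ∀ (B : Type) [CommRing B] (φ : A →+* B),
        LinearMap.ker ((M.map φ).mulVecLin) = LinearMap.range ((S.map φ).mulVecLin) :=
  stmt_10_general A M h1 h2
end

section
/- Let $\mathrm{LG}(r, E_\bullet)$ be a prelinked Grassmannian over a field $K$ (i.e., $S = \mathrm{Spec}\,K$), associated to a finite directed graph $G$ connected by directed paths, vector spaces $E_v$ of dimension $d$, and linear maps $f_e$ satisfying the prelinked compatibility condition. Then at every simple point, $\mathrm{LG}(r, E_\bullet)$ is smooth of dimension $r(d-r)$; in particular, the tangent space at a simple point $(F_v)_v$ with chosen data $v_1,\dots,v_r \in V(G)$, $s_i \in F_{v_i}$ is canonically isomorphic to $\bigoplus_{i=1}^r E_{v_i}/F_{v_i}$. -/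
/-- `IsPathTo src tgt u v l`: the list of edges `l` forms a directed path from
`u` to `v`. -/
def IsPathTo {Vtx Edg : Type*} (src tgt : Edg → Vtx) : Vtx → Vtx → List Edg → Prop
  | u, v, [] => u = v
  | u, v, e :: l => src e = u ∧ IsPathTo src tgt (tgt e) v l

/-- The composite `f_P = f_{e_n} ∘ ⋯ ∘ f_{e_1}` of the matrices along a path. -/
def pathProd {Edg : Type*} {A : Type*} [CommRing A] {d : ℕ}
    (f : Edg → Matrix (Fin d) (Fin d) A) (l : List Edg) : Matrix (Fin d) (Fin d) A :=
  l.foldl (fun acc e => f e * acc) 1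

/-- The prelinked Grassmannian compatibility condition. -/
def Prelinked {Vtx Edg : Type*} (src tgt : Edg → Vtx) {A : Type*} [CommRing A]
    {d : ℕ} (f : Edg → Matrix (Fin d) (Fin d) A) : Prop :=
  ∀ (u v : Vtx) (l l' : List Edg), IsPathTo src tgt u v l → IsPathTo src tgt u v l' →
    ∃ s s' : A, s • pathProd f l = s' • pathProd f l' ∧
      ((∀ l'' : List Edg, IsPathTo src tgt u v l'' → l.length ≤ l''.length) → IsUnit s') ∧
      ((∀ l'' : List Edg, IsPathTo src tgt u v l'' → l'.length ≤ l''.length) → IsUnit s)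

/-- Reduction of a submodule of `R^d` along a ring map `g : R →+* S`. -/
def redSub {R S : Type*} [CommRing R] [CommRing S] (g : R →+* S) {d : ℕ}
    (N : Submodule R (Fin d → R)) : Submodule S (Fin d → S) :=
  Submodule.span S ((fun x i => g (x i)) '' (N : Set (Fin d → R)))

/-- Points of the prelinked Grassmannian over a commutative `K`-algebra `R`:
families of direct-summand submodules of `R^d`, linked by the base-changed maps. -/
def LGpoint {K : Type*} [Field K] {Vtx Edg : Type*} (src tgt : Edg → Vtx) {d : ℕ}
    (f : Edg → Matrix (Fin d) (Fin d) K) (R : Type*) [CommRing R] [Algebra K R]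
    (𝓕 : Vtx → Submodule R (Fin d → R)) : Prop :=
  (∀ v, ∃ c, IsCompl (𝓕 v) c) ∧
  ∀ e : Edg, Submodule.map ((f e).map (algebraMap K R)).mulVecLin (𝓕 (src e)) ≤ 𝓕 (tgt e)

/-!
Fix minimal paths `Q v i` from `v_i` to `v`. By the prelinked condition every path composite is a
scalar multiple of the minimal one with the same endpoints, so at a simple point the vectors
`f_{Q v i}(s_i)` form a basis of each `F_v`. Over a `K`-algebra `A` with local residue map
`ρ : A → K`, any lifts `t_i` of the `s_i` give a point `v ↦ span_i f_{Q v i}(t_i)`: it is a direct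
summand because its generators stay independent modulo `ker ρ`, and `f_e` maps generators to
multiples of generators because `f_e ∘ f_{Q (src e) i}` is again a path composite. Conversely, by
Nakayama every point reducing to `(F_v)` has this form, for lifts `t_i` taken inside it. Hence
points lift along `A → A/I`, and over `K[ε]` the points reducing to `(F_v)` are parametrized by the
`ε`-parts of the `t_i` modulo `F_{v_i}`.
-/

open Submodule Set Matrix

section Paths

variable {Vtx Edg : Type*} {src tgt : Edg → Vtx}

theorem IsPathTo.append {u v w : Vtx} {l l' : List Edg} (h : IsPathTo src tgt u v l)
    (h' : IsPathTo src tgt v w l') : IsPathTo src tgt u w (l ++ l') := by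
  induction l generalizing u with
  | nil => cases h; exact h'
  | cons e l ih => exact ⟨h.1, ih h.2⟩

def IsMinimalPath (src tgt : Edg → Vtx) (u v : Vtx) (l : List Edg) : Prop :=
  IsPathTo src tgt u v l ∧ ∀ l', IsPathTo src tgt u v l' → l.length ≤ l'.length

theorem exists_isMinimalPath {u v : Vtx} (h : ∃ l, IsPathTo src tgt u v l) :
    ∃ l, IsMinimalPath src tgt u v l := by
  classical
  obtain ⟨l₀, hl₀⟩ := h
  have hex : ∃ n, ∃ l : List Edg, IsPathTo src tgt u v l ∧ l.length = n := ⟨_, l₀, hl₀, rfl⟩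
  obtain ⟨l, hl, hlen⟩ := Nat.find_spec hex
  exact ⟨l, hl, fun l' hl' => hlen ▸ Nat.find_min' hex ⟨l', hl', rfl⟩⟩

theorem IsMinimalPath.eq_nil {u : Vtx} {l : List Edg} (h : IsMinimalPath src tgt u u l) :
    l = [] :=
  List.eq_nil_of_length_eq_zero (Nat.le_zero.mp (h.2 [] rfl))

variable {A : Type*} [CommRing A] {d : ℕ} (f : Edg → Matrix (Fin d) (Fin d) A)

theorem foldl_mul_eq_pathProd_mul (M : Matrix (Fin d) (Fin d) A) (l : List Edg) :
    l.foldl (fun acc e => f e * acc) M = pathProd f l * M := by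
  induction l generalizing M with
  | nil => simp [pathProd]
  | cons e l ih =>
    simp only [pathProd, List.foldl_cons] at ih ⊢
    rw [ih (f e * M), ih (f e * 1), Matrix.mul_one, Matrix.mul_assoc]

theorem pathProd_nil : pathProd f [] = 1 := rfl

theorem pathProd_cons (e : Edg) (l : List Edg) : pathProd f (e :: l) = pathProd f l * f e := by
  rw [pathProd, List.foldl_cons, foldl_mul_eq_pathProd_mul, Matrix.mul_one]

theorem pathProd_append_singleton (l : List Edg) (e : Edg) :
    pathProd f (l ++ [e]) = f e * pathProd f l := by
  rw [pathProd, List.foldl_append]; rfl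

variable {f}

theorem Prelinked.exists_pathProd_eq_smul (hpre : Prelinked src tgt f) {u v : Vtx}
    {l l₀ : List Edg} (hl : IsPathTo src tgt u v l) (hl₀ : IsMinimalPath src tgt u v l₀) :
    ∃ c : A, pathProd f l = c • pathProd f l₀ := by
  obtain ⟨s, s', h, -, hs⟩ := hpre u v l l₀ hl hl₀.1
  obtain ⟨s, rfl⟩ := hs hl₀.2
  exact ⟨↑s⁻¹ * s', by rw [mul_smul, ← h, smul_smul, Units.inv_mul, one_smul]⟩

end Paths

section VecMap

variable {R S ι : Type*} [CommRing R] [CommRing S]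

def vecMap (g : R →+* S) : (ι → R) →ₛₗ[g] (ι → S) where
  toFun x i := g (x i)
  map_add' x y := funext fun i => map_add g (x i) (y i)
  map_smul' a x := funext fun i => map_mul g a (x i)

@[simp] theorem vecMap_apply (g : R →+* S) (x : ι → R) (i : ι) : vecMap g x i = g (x i) := rfl

theorem vecMap_mulVec {κ : Type*} [Fintype κ] (g : R →+* S) (M : Matrix ι κ R) (x : κ → R) :
    vecMap g (M *ᵥ x) = M.map g *ᵥ vecMap g x :=
  funext (g.map_mulVec M x)

theorem vecMap_mulVec_map_algebraMap {K : Type*} [CommRing K] [Algebra K R] [Algebra K S]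
    {g : R →+* S} (hg : ∀ x : K, g (algebraMap K R x) = algebraMap K S x) [Fintype ι]
    (M : Matrix ι ι K) (x : ι → R) :
    vecMap g (M.map (algebraMap K R) *ᵥ x) = M.map (algebraMap K S) *ᵥ vecMap g x := by
  rw [vecMap_mulVec, Matrix.map_map]
  congr 1
  ext i j
  exact hg (M i j)

variable {d : ℕ}

theorem redSub_span (g : R →+* S) (T : Set (Fin d → R)) :
    redSub g (span R T) = span S (vecMap g '' T) := by
  refine le_antisymm (span_le.mpr ?_) (span_mono (image_mono subset_span))
  rintro _ ⟨x, hx, rfl⟩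
  exact (span_le (p := (span S (vecMap g '' T)).comap (vecMap g))).mpr
    (fun y hy => subset_span ⟨y, hy, rfl⟩) hx

theorem mem_ker_smul_of_vecMap_eq_zero {ρ : R →+* S} {N c : Submodule R (Fin d → R)}
    (hc : IsCompl N c) {z : Fin d → R} (hz : z ∈ N) (h0 : vecMap ρ z = 0) :
    z ∈ RingHom.ker ρ • N := by
  classical
  let π := N.projectionOnto c hc
  have hπz : (π z : Fin d → R) = z := congrArg Subtype.val (projectionOnto_apply_left hc ⟨z, hz⟩)
  rw [← hπz, pi_eq_sum_univ z, map_sum, Submodule.coe_sum]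
  refine sum_mem fun j _ => ?_
  rw [map_smul, Submodule.coe_smul]
  exact smul_mem_smul (congrFun h0 j) (π _).2

end VecMap

theorem isLocalHom_of_ker_eq_maximalIdeal {A K : Type*} [CommRing A] [IsLocalRing A] [Field K]
    {ρ : A →+* K} (h : RingHom.ker ρ = IsLocalRing.maximalIdeal A) : IsLocalHom ρ := by
  refine ⟨fun a ha => ?_⟩
  by_contra hna
  have : a ∈ RingHom.ker ρ := h ▸ hna
  exact ha.ne_zero this

theorem isLocalHom_quotient_lift {A B : Type*} [CommRing A] [CommRing B] {ρ : A →+* B}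
    [IsLocalHom ρ] (I : Ideal A) (h : ∀ a ∈ I, ρ a = 0) :
    IsLocalHom (Ideal.Quotient.lift I ρ h) := by
  refine ⟨fun x hx => ?_⟩
  obtain ⟨a, rfl⟩ := Ideal.Quotient.mk_surjective x
  exact (IsUnit.of_map ρ a hx).map _

section ResidueMap

variable {K A : Type*} [Field K] [CommRing A] [Algebra K A] {ρ : A →+* K} {d : ℕ}

theorem exists_mem_vecMap_eq_of_mem_redSub (hρ : ∀ x : K, ρ (algebraMap K A x) = x)
    {N : Submodule A (Fin d → A)} {x : Fin d → K} (hx : x ∈ redSub ρ N) :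
    ∃ t ∈ N, vecMap ρ t = x := by
  -- the section of `ρ` makes `vecMap ρ` `K`-linear, so `vecMap ρ '' N` is already a subspace
  let L : (Fin d → A) →ₗ[K] (Fin d → K) :=
    { vecMap ρ with map_smul' := fun c t => by ext i; simp [Algebra.smul_def, hρ] }
  have : redSub ρ N = (N.restrictScalars K).map L := span_eq ((N.restrictScalars K).map L)
  rw [this] at hx
  exact hx

theorem eq_span_of_redSub_eq [IsLocalHom ρ] (hρ : ∀ x : K, ρ (algebraMap K A x) = x)
    {ι : Type*} [Fintype ι] {N : Submodule A (Fin d → A)} (hN : ∃ c, IsCompl N c)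
    {x : ι → Fin d → A} (hx : ∀ i, x i ∈ N)
    (hred : redSub ρ N = span K (range fun i => vecMap ρ (x i))) :
    N = span A (range x) := by
  obtain ⟨c, hc⟩ := hN
  refine le_antisymm ?_ (span_le.mpr (range_subset_iff.mpr hx))
  have hker : RingHom.ker ρ ≤ Ideal.jacobson ⊥ := fun a ha =>
    Ideal.mem_jacobson_bot.mpr fun b => IsUnit.of_map ρ _ (by simp [RingHom.mem_ker.mp ha])
  refine le_of_le_smul_of_le_jacobson_bot (CoFG.of_finite.fg_of_isCompl hc.symm) hker ?_
  intro z hz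
  have hz' : vecMap ρ z ∈ redSub ρ N := subset_span ⟨z, hz, rfl⟩
  rw [hred] at hz'
  obtain ⟨a, ha⟩ := (mem_span_range_iff_exists_fun K).mp hz'
  set w := ∑ i, algebraMap K A (a i) • x i
  have hw : vecMap ρ w = vecMap ρ z := by
    rw [← ha]; ext k; simp [w, Finset.sum_apply, Algebra.smul_def, hρ]
  have hzw : z - w ∈ RingHom.ker ρ • N :=
    mem_ker_smul_of_vecMap_eq_zero hc (N.sub_mem hz (sum_mem fun i _ => N.smul_mem _ (hx i)))
      (by rw [map_sub, hw, sub_self])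
  rw [← add_sub_cancel w z]
  exact add_mem (mem_sup_left (sum_mem fun i _ => smul_mem _ _ (subset_span (mem_range_self i))))
    (mem_sup_right hzw)

end ResidueMap

section DirectSummand

theorem exists_isCompl_range_mulVecLin {A m n : Type*} [CommRing A] [Fintype m] [Fintype n]
    [DecidableEq n] {L : Matrix n m A} {X : Matrix m n A} (h : L * X = 1) :
    ∃ c, IsCompl (LinearMap.range X.mulVecLin) c :=
  ⟨_, LinearMap.isCompl_of_proj (f := X.mulVecLin.rangeRestrict ∘ₗ L.mulVecLin)
    fun ⟨_, y, hy⟩ => by subst hy; ext1; simp [mulVec_mulVec, h]⟩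

theorem exists_mul_eq_one_of_linearIndependent_col {K m n : Type*} [Field K] [Fintype m]
    [Fintype n] [DecidableEq n] {M : Matrix m n K} (h : LinearIndependent K M.col) :
    ∃ C : Matrix n m K, C * M = 1 := by
  classical
  obtain ⟨g, hg⟩ := M.mulVecLin.exists_leftInverse_of_injective
    (LinearMap.ker_eq_bot.mpr (mulVec_injective_iff.mpr h))
  refine ⟨LinearMap.toMatrix' g, ?_⟩
  simpa [LinearMap.toMatrix'_comp, ← Matrix.toLin'_apply', LinearMap.toMatrix'_toLin',
    LinearMap.toMatrix'_id] using congrArg LinearMap.toMatrix' hg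

variable {K A : Type*} [Field K] [CommRing A] [Algebra K A] {ρ : A →+* K} {d : ℕ}

theorem exists_isCompl_span_of_linearIndependent [IsLocalHom ρ]
    (hρ : ∀ x : K, ρ (algebraMap K A x) = x) {ι : Type*} [Fintype ι]
    {x : ι → Fin d → A} (hli : LinearIndependent K fun i => vecMap ρ (x i)) :
    ∃ c, IsCompl (span A (range x)) c := by
  classical
  -- lift a left inverse `C` of the residue matrix of `X`: `C' * X` reduces to `1`, so is invertible
  set X : Matrix (Fin d) ι A := (Matrix.of x)ᵀ
  obtain ⟨C, hC⟩ := exists_mul_eq_one_of_linearIndependent_col (M := X.map ρ) hli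
  set C' := C.map (algebraMap K A)
  have hdet : IsUnit (C' * X).det := by
    refine IsUnit.of_map ρ _ ?_
    have hC' : C'.map ρ = C := by ext i j; exact hρ (C i j)
    rw [RingHom.map_det, RingHom.mapMatrix_apply, Matrix.map_mul, hC', hC, det_one]
    exact isUnit_one
  have hL : ((C' * X)⁻¹ * C') * X = 1 := by rw [Matrix.mul_assoc, nonsing_inv_mul _ hdet]
  have hX : X.col = x := rfl
  simpa [range_mulVecLin, hX] using exists_isCompl_range_mulVecLin hL

end DirectSummand

theorem linearIndependent_and_span_eq_of_eq_smul {K M ι : Type*} [Field K] [AddCommGroup M]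
    [Module K M] {x y : ι → M} {c : ι → K} (hxy : ∀ i, x i = c i • y i)
    (hx : LinearIndependent K x) :
    LinearIndependent K y ∧ span K (range y) = span K (range x) := by
  have hc : ∀ i, c i ≠ 0 := fun i h => hx.ne_zero i (by rw [hxy, h, zero_smul])
  have hyx : ∀ i, y i = (c i)⁻¹ • x i := fun i => by
    rw [hxy, smul_smul, inv_mul_cancel₀ (hc i), one_smul]
  refine ⟨?_, le_antisymm ?_ ?_⟩
  · convert hx.units_smul fun i => (Units.mk0 (c i) (hc i))⁻¹ using 1
    ext i
    simp [hyx i, Units.smul_def]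
  all_goals
    rw [span_le]
    rintro _ ⟨i, rfl⟩
  · exact hyx i ▸ smul_mem _ _ (subset_span (mem_range_self i))
  · exact hxy i ▸ smul_mem _ _ (subset_span (mem_range_self i))

section LinkedSpans

variable {K : Type*} [Field K] {Vtx Edg ι : Type*} {src tgt : Edg → Vtx} {d : ℕ}
  {f : Edg → Matrix (Fin d) (Fin d) K} {A B : Type*} [CommRing A] [Algebra K A] [CommRing B]
  [Algebra K B]

theorem LGpoint.pathProd_mulVec_mem {𝓕 : Vtx → Submodule A (Fin d → A)}
    (h𝓕 : LGpoint src tgt f A 𝓕) {u v : Vtx} {l : List Edg} (hl : IsPathTo src tgt u v l)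
    {t : Fin d → A} (ht : t ∈ 𝓕 u) : (pathProd f l).map (algebraMap K A) *ᵥ t ∈ 𝓕 v := by
  induction l generalizing u t with
  | nil =>
    cases hl
    simpa [pathProd_nil, Matrix.map_one] using ht
  | cons e l ih =>
    obtain ⟨rfl, hl⟩ := hl
    rw [pathProd_cons, Matrix.map_mul, ← mulVec_mulVec]
    exact ih hl (h𝓕.2 e ⟨t, ht, rfl⟩)

variable (f) in
def pathVec (Q : Vtx → ι → List Edg) (t : ι → Fin d → A) (v : Vtx) (i : ι) : Fin d → A :=
  (pathProd f (Q v i)).map (algebraMap K A) *ᵥ t i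

variable (f) in
def pathSpan (Q : Vtx → ι → List Edg) (t : ι → Fin d → A) (v : Vtx) : Submodule A (Fin d → A) :=
  span A (range (pathVec f Q t v))

variable {Q : Vtx → ι → List Edg}

theorem pathVec_self (s : ι → Fin d → K) (v : Vtx) (i : ι) :
    pathVec f Q s v i = pathProd f (Q v i) *ᵥ s i := by
  simp [pathVec]

theorem vecMap_pathVec {g : A →+* B} (hg : ∀ x : K, g (algebraMap K A x) = algebraMap K B x)
    (t : ι → Fin d → A) (v : Vtx) (i : ι) :
    vecMap g (pathVec f Q t v i) = pathVec f Q (fun i => vecMap g (t i)) v i :=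
  vecMap_mulVec_map_algebraMap hg _ _

theorem redSub_pathSpan {g : A →+* B} (hg : ∀ x : K, g (algebraMap K A x) = algebraMap K B x)
    (t : ι → Fin d → A) (v : Vtx) :
    redSub g (pathSpan f Q t v) = pathSpan f Q (fun i => vecMap g (t i)) v := by
  rw [pathSpan, redSub_span, ← range_comp]
  exact congrArg (fun x => span B (range x)) (funext (vecMap_pathVec hg t v))

theorem mem_pathSpan_of_eq_nil {t : ι → Fin d → A} {v : Vtx} {i : ι} (h : Q v i = []) :
    t i ∈ pathSpan f Q t v := by
  have : pathVec f Q t v i = t i := by simp [pathVec, h, pathProd_nil, Matrix.map_one]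
  exact this ▸ subset_span (mem_range_self i)

variable {vsel : ι → Vtx} {s : ι → Fin d → K} {ρ : A →+* K}

theorem lgPoint_pathSpan [IsLocalHom ρ] [Fintype ι]
    (hρ : ∀ x : K, ρ (algebraMap K A x) = x) (hpre : Prelinked src tgt f)
    (hQ : ∀ v i, IsMinimalPath src tgt (vsel i) v (Q v i))
    (hli : ∀ v, LinearIndependent K (pathVec f Q s v)) {t : ι → Fin d → A}
    (ht : ∀ i, vecMap ρ (t i) = s i) : LGpoint src tgt f A (pathSpan f Q t) := by
  refine ⟨fun v => exists_isCompl_span_of_linearIndependent hρ ?_, fun e => ?_⟩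
  · simpa only [vecMap_pathVec hρ, ht] using hli v
  rw [pathSpan, Submodule.map_span, span_le]
  rintro _ ⟨_, ⟨i, rfl⟩, rfl⟩
  obtain ⟨c, hc⟩ := hpre.exists_pathProd_eq_smul
    ((hQ (src e) i).1.append (show IsPathTo src tgt (src e) (tgt e) [e] from ⟨rfl, rfl⟩))
    (hQ (tgt e) i)
  have : (f e).map (algebraMap K A) *ᵥ pathVec f Q t (src e) i = c • pathVec f Q t (tgt e) i := by
    rw [pathVec, mulVec_mulVec, ← Matrix.map_mul, ← pathProd_append_singleton, hc, pathVec,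
      Matrix.map_smul _ c fun a => by rw [smul_eq_mul, map_mul, Algebra.smul_def], smul_mulVec]
  rw [SetLike.mem_coe, mulVecLin_apply, this]
  exact smul_of_tower_mem _ c (subset_span (mem_range_self i))

theorem LGpoint.eq_pathSpan [IsLocalHom ρ] [Fintype ι] (hρ : ∀ x : K, ρ (algebraMap K A x) = x)
    {𝓖 : Vtx → Submodule A (Fin d → A)} (h𝓖 : LGpoint src tgt f A 𝓖)
    (hQ : ∀ v i, IsPathTo src tgt (vsel i) v (Q v i))
    (hred : ∀ v, redSub ρ (𝓖 v) = pathSpan f Q s v) {t : ι → Fin d → A}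
    (ht : ∀ i, t i ∈ 𝓖 (vsel i)) (hts : ∀ i, vecMap ρ (t i) = s i) : 𝓖 = pathSpan f Q t := by
  funext v
  refine eq_span_of_redSub_eq hρ (h𝓖.1 v) (fun i => h𝓖.pathProd_mulVec_mem (hQ v i) (ht i)) ?_
  simp only [vecMap_pathVec hρ, hts, hred]
  rfl

end LinkedSpans

section SimplePoint

variable {K : Type*} [Field K] {Vtx Edg ι : Type*} {src tgt : Edg → Vtx} {d : ℕ}
  {f : Edg → Matrix (Fin d) (Fin d) K} {Q : Vtx → ι → List Edg} {vsel : ι → Vtx}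
  {s : ι → Fin d → K}

theorem linearIndependent_pathVec_and_pathSpan_eq (hpre : Prelinked src tgt f)
    (hQ : ∀ v i, IsMinimalPath src tgt (vsel i) v (Q v i)) {v : Vtx} {P : ι → List Edg}
    (hP : ∀ i, IsPathTo src tgt (vsel i) v (P i))
    (hli : LinearIndependent K fun i => pathProd f (P i) *ᵥ s i) :
    LinearIndependent K (pathVec f Q s v) ∧
      pathSpan f Q s v = span K (range fun i => pathProd f (P i) *ᵥ s i) := by
  choose c hc using fun i => hpre.exists_pathProd_eq_smul (hP i) (hQ v i)
  exact linearIndependent_and_span_eq_of_eq_smul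
    (fun i => by rw [hc, smul_mulVec, pathVec_self]) hli

end SimplePoint

section Lifting

variable {K : Type*} [Field K] {Vtx Edg ι : Type*} [Fintype ι] {src tgt : Edg → Vtx}
  {d : ℕ} {f : Edg → Matrix (Fin d) (Fin d) K} {Q : Vtx → ι → List Edg} {vsel : ι → Vtx}
  {s : ι → Fin d → K}

theorem exists_lgPoint_lift {A : Type*} [CommRing A] [Algebra K A] {ρ : A →+* K} [IsLocalHom ρ]
    (hρ : ∀ x : K, ρ (algebraMap K A x) = x) (hpre : Prelinked src tgt f)
    (hQ : ∀ v i, IsMinimalPath src tgt (vsel i) v (Q v i))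
    (hli : ∀ v, LinearIndependent K (pathVec f Q s v)) (I : Ideal A) (hIρ : I ≤ RingHom.ker ρ)
    {𝓕' : Vtx → Submodule (A ⧸ I) (Fin d → A ⧸ I)} (h𝓕' : LGpoint src tgt f (A ⧸ I) 𝓕')
    (hred : ∀ v, redSub (Ideal.Quotient.lift I ρ fun _ ha => hIρ ha) (𝓕' v) = pathSpan f Q s v) :
    ∃ 𝓕 : Vtx → Submodule A (Fin d → A),
      LGpoint src tgt f A 𝓕 ∧ ∀ v, redSub (Ideal.Quotient.mk I) (𝓕 v) = 𝓕' v := by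
  set ρ' := Ideal.Quotient.lift I ρ fun _ ha => hIρ ha
  have := isLocalHom_quotient_lift (ρ := ρ) I fun _ ha => hIρ ha
  have hmk : ∀ x : K, Ideal.Quotient.mk I (algebraMap K A x) = algebraMap K (A ⧸ I) x :=
    fun _ => rfl
  have hρ' : ∀ x : K, ρ' (algebraMap K (A ⧸ I) x) = x := hρ
  have hs : ∀ i, ∃ t ∈ 𝓕' (vsel i), vecMap ρ' t = s i := fun i =>
    exists_mem_vecMap_eq_of_mem_redSub hρ'
      (hred (vsel i) ▸ mem_pathSpan_of_eq_nil (hQ (vsel i) i).eq_nil)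
  choose t' ht'𝓕 ht's using hs
  choose t ht using fun i => (Ideal.Quotient.mk_surjective (I := I)).comp_left (t' i)
  have ht' : t' = fun i => vecMap (Ideal.Quotient.mk I) (t i) := funext fun i => (ht i).symm
  subst ht'
  refine ⟨pathSpan f Q t, lgPoint_pathSpan hρ hpre hQ hli fun i => ?_, fun v => ?_⟩
  · rw [← ht's i]; rfl
  · rw [redSub_pathSpan hmk, h𝓕'.eq_pathSpan hρ' (fun v i => (hQ v i).1) hred ht'𝓕 ht's]

end Lifting

section DualNumber

open TrivSqZeroExt

variable {K : Type*} [Field K] {d : ℕ}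

def dualFst (K : Type*) [Field K] : DualNumber K →+* K := (fstHom K K K).toRingHom

@[simp] theorem dualFst_apply (a : DualNumber K) : dualFst K a = a.fst := rfl

theorem dualFst_algebraMap (x : K) : dualFst K (algebraMap K (DualNumber K) x) = x := rfl

instance : IsLocalHom (dualFst K) :=
  ⟨fun _ ha => isUnit_iff_isUnit_fst.mpr ha⟩

def dualVec (x y : Fin d → K) : Fin d → DualNumber K := fun k => inl (x k) + inr (y k)

@[simp] theorem vecMap_dualFst_dualVec (x y : Fin d → K) :
    vecMap (dualFst K) (dualVec x y) = x := by
  ext k; simp [dualVec]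

@[simp] theorem snd_dualVec (x y : Fin d → K) (k : Fin d) : (dualVec x y k).snd = y k := by
  simp [dualVec]

theorem dualVec_eq_add_inr {x : Fin d → K} {t : Fin d → DualNumber K}
    (ht : vecMap (dualFst K) t = x) (y : Fin d → K) :
    dualVec x y = t + fun k => inr (y k - (t k).snd) := by
  subst ht; ext k <;> simp [dualVec]

theorem inr_mem_of_mem_redSub {N : Submodule (DualNumber K) (Fin d → DualNumber K)}
    {w : Fin d → K} (hw : w ∈ redSub (dualFst K) N) :
    (fun k => inr (w k)) ∈ N := by
  obtain ⟨u, hu, rfl⟩ := exists_mem_vecMap_eq_of_mem_redSub dualFst_algebraMap hw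
  convert N.smul_mem DualNumber.eps hu using 1
  ext k <;> simp

theorem snd_mem_redSub_of_fst_eq_zero {ι : Type*} [Fintype ι] {g : ι → Fin d → DualNumber K}
    (hli : LinearIndependent K fun j => vecMap (dualFst K) (g j))
    {z : Fin d → DualNumber K} (hz : z ∈ span (DualNumber K) (range g))
    (hz0 : vecMap (dualFst K) z = 0) :
    (fun k => (z k).snd) ∈ redSub (dualFst K) (span (DualNumber K) (range g)) := by
  obtain ⟨c, rfl⟩ := (mem_span_range_iff_exists_fun (DualNumber K)).mp hz
  have hc : ∀ j, (c j).fst = 0 := by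
    refine Fintype.linearIndependent_iff.mp hli _ ?_
    ext k
    simpa [Finset.sum_apply] using congrFun hz0 k
  rw [redSub_span, ← range_comp, mem_span_range_iff_exists_fun]
  refine ⟨fun j => (c j).snd, ?_⟩
  ext k
  simp [Finset.sum_apply, snd_sum, snd_mul, hc, mul_comm]

end DualNumber

section TangentSpace

variable {K : Type*} [Field K] {Vtx Edg ι : Type*} [Fintype ι]
  {src tgt : Edg → Vtx} {d : ℕ} {f : Edg → Matrix (Fin d) (Fin d) K} {Q : Vtx → ι → List Edg}
  {vsel : ι → Vtx} {s : ι → Fin d → K}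

theorem pathSpan_dualVec_injective (hQ : ∀ v i, IsMinimalPath src tgt (vsel i) v (Q v i))
    (hli : ∀ v, LinearIndependent K (pathVec f Q s v)) :
    Function.Injective fun q : (i : ι) → (Fin d → K) ⧸ pathSpan f Q s (vsel i) =>
      pathSpan f Q (fun i => dualVec (s i) (q i).out) := by
  intro q q' h
  funext i
  -- `Q (vsel i) i = []`, so `s i + ε q i` and `s i + ε q' i` lie in the same submodule at `vsel i`
  set t' := fun i => dualVec (s i) (q' i).out
  replace h : pathSpan f Q (fun i => dualVec (s i) (q i).out) = pathSpan f Q t' := h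
  have hnil := (hQ (vsel i) i).eq_nil
  have hmem : dualVec (s i) (q i).out - t' i ∈ pathSpan f Q t' (vsel i) :=
    sub_mem (h ▸ mem_pathSpan_of_eq_nil hnil) (mem_pathSpan_of_eq_nil hnil)
  have hfst : LinearIndependent K fun j => vecMap (dualFst K) (pathVec f Q t' (vsel i) j) := by
    simpa only [vecMap_pathVec (g := dualFst K) dualFst_algebraMap, t', vecMap_dualFst_dualVec]
      using hli (vsel i)
  have hsnd := snd_mem_redSub_of_fst_eq_zero hfst hmem (by simp [t'])
  rw [← pathSpan, redSub_pathSpan (g := dualFst K) dualFst_algebraMap] at hsnd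
  rw [← Submodule.Quotient.mk_out (q i), ← Submodule.Quotient.mk_out (q' i),
    Submodule.Quotient.eq]
  simp only [t', Pi.sub_apply, TrivSqZeroExt.snd_sub, snd_dualVec, vecMap_dualFst_dualVec] at hsnd
  exact hsnd

theorem lgPoint_and_redSub_eq_iff (hpre : Prelinked src tgt f)
    (hQ : ∀ v i, IsMinimalPath src tgt (vsel i) v (Q v i))
    (hli : ∀ v, LinearIndependent K (pathVec f Q s v))
    (𝓕 : Vtx → Submodule (DualNumber K) (Fin d → DualNumber K)) :
    (LGpoint src tgt f (DualNumber K) 𝓕 ∧ ∀ v, redSub (dualFst K) (𝓕 v) = pathSpan f Q s v) ↔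
      ∃ q : (i : ι) → (Fin d → K) ⧸ pathSpan f Q s (vsel i),
        pathSpan f Q (fun i => dualVec (s i) (q i).out) = 𝓕 := by
  constructor
  · rintro ⟨h𝓕, hred⟩
    have hs : ∀ i, ∃ t ∈ 𝓕 (vsel i), vecMap (dualFst K) t = s i := fun i =>
      exists_mem_vecMap_eq_of_mem_redSub dualFst_algebraMap
        (hred (vsel i) ▸ mem_pathSpan_of_eq_nil (hQ (vsel i) i).eq_nil)
    choose t ht𝓕 hts using hs
    refine ⟨fun i => Submodule.Quotient.mk fun k => (t i k).snd,
      (h𝓕.eq_pathSpan dualFst_algebraMap (fun v i => (hQ v i).1) hred (fun i => ?_)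
        fun i => vecMap_dualFst_dualVec _ _).symm⟩
    rw [dualVec_eq_add_inr (hts i)]
    refine add_mem (ht𝓕 i) (inr_mem_of_mem_redSub ?_)
    rw [hred]
    exact (Submodule.Quotient.eq _).mp (Submodule.Quotient.mk_out _)
  · rintro ⟨q, rfl⟩
    refine ⟨lgPoint_pathSpan dualFst_algebraMap hpre hQ hli fun i => vecMap_dualFst_dualVec _ _,
      fun v => ?_⟩
    rw [redSub_pathSpan (g := dualFst K) dualFst_algebraMap]
    simp only [vecMap_dualFst_dualVec]

theorem nonempty_tangentSpace_equiv (hpre : Prelinked src tgt f)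
    (hQ : ∀ v i, IsMinimalPath src tgt (vsel i) v (Q v i))
    (hli : ∀ v, LinearIndependent K (pathVec f Q s v)) :
    Nonempty ({ 𝓕 : Vtx → Submodule (DualNumber K) (Fin d → DualNumber K) //
        LGpoint src tgt f (DualNumber K) 𝓕 ∧ ∀ v, redSub (dualFst K) (𝓕 v) = pathSpan f Q s v } ≃
      ((i : ι) → (Fin d → K) ⧸ pathSpan f Q s (vsel i))) :=
  ⟨(Equiv.subtypeEquivRight (lgPoint_and_redSub_eq_iff hpre hQ hli)).trans
    (Equiv.ofInjective _ (pathSpan_dualVec_injective hQ hli)).symm⟩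

end TangentSpace


theorem stmt_13_general (K : Type*) [Field K] (Vtx Edg : Type*)
    (src tgt : Edg → Vtx) (d r : ℕ)
    (f : Edg → Matrix (Fin d) (Fin d) K)
    (hconn : ∀ u v : Vtx, ∃ l : List Edg, IsPathTo src tgt u v l)
    (hpre : Prelinked src tgt f)
    -- the simple `K`-point `(F_v)`:
    (F : Vtx → Submodule K (Fin d → K))
    (hFrank : ∀ v, Module.finrank K (F v) = r)
    (vsel : Fin r → Vtx) (ssel : Fin r → (Fin d → K))
    (hsimple : ∀ v : Vtx, ∃ P : Fin r → List Edg,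
      (∀ i, IsPathTo src tgt (vsel i) v (P i)) ∧
      LinearIndependent K (fun i => (pathProd f (P i)).mulVec (ssel i)) ∧
      Submodule.span K (Set.range fun i => (pathProd f (P i)).mulVec (ssel i)) = F v) :
    -- (1) infinitesimal lifting (smoothness):
    (∀ (A : Type*) [CommRing A] [IsLocalRing A] [IsNoetherianRing A] [Algebra K A]
      (ρ : A →+* K), (∀ x : K, ρ (algebraMap K A x) = x) →
      RingHom.ker ρ = IsLocalRing.maximalIdeal A →
      ∀ (I : Ideal A) (hIρ : I ≤ RingHom.ker ρ)
        (𝓕' : Vtx → Submodule (A ⧸ I) (Fin d → A ⧸ I)),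
        LGpoint src tgt f (A ⧸ I) 𝓕' →
        (∀ v, redSub (Ideal.Quotient.lift I ρ fun a ha => hIρ ha) (𝓕' v) = F v) →
        ∃ 𝓕 : Vtx → Submodule A (Fin d → A),
          LGpoint src tgt f A 𝓕 ∧
          ∀ v, redSub (Ideal.Quotient.mk I) (𝓕 v) = 𝓕' v) ∧
    -- (2) the tangent space is `⊕ᵢ E_{v_i}/F_{v_i}`, of dimension `r(d-r)`:
    Nonempty
      ({ 𝓕 : Vtx → Submodule (DualNumber K) (Fin d → DualNumber K) //
          LGpoint src tgt f (DualNumber K) 𝓕 ∧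
          ∀ v, redSub (TrivSqZeroExt.fstHom (S := K) (R := K) (M := K)).toRingHom (𝓕 v)
            = F v } ≃
        ((i : Fin r) → (Fin d → K) ⧸ F (vsel i))) ∧
    (Module.finrank K ((i : Fin r) → (Fin d → K) ⧸ F (vsel i)) = r * (d - r)) := by
  choose Q hQ using fun v (i : Fin r) => exists_isMinimalPath (hconn (vsel i) v)
  have hbasis : ∀ v, LinearIndependent K (pathVec f Q ssel v) ∧ pathSpan f Q ssel v = F v := by
    intro v
    obtain ⟨P, hP, hli, hspan⟩ := hsimple v
    exact hspan ▸ linearIndependent_pathVec_and_pathSpan_eq hpre hQ hP hli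
  choose hli hF using hbasis
  obtain rfl : pathSpan f Q ssel = F := funext hF
  refine ⟨fun A _ _ _ _ ρ hρ hker I hIρ 𝓕' h𝓕' hred => ?_,
    nonempty_tangentSpace_equiv hpre hQ hli, ?_⟩
  · have := isLocalHom_of_ker_eq_maximalIdeal hker
    exact exists_lgPoint_lift hρ hpre hQ hli I hIρ h𝓕' hred
  · simp [Module.finrank_pi_fintype, Submodule.finrank_quotient, hFrank]

/-- Proposition `simple-smooth`: a prelinked Grassmannian
over a field is smooth of dimension `r(d-r)` at every simple point, expressed
by (1) the infinitesimal lifting criterion: points over `A/I` reducing to the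
given simple point lift to points over `A`, for `A` Noetherian local with
residue field `K`; and (2) the identification of the tangent space (the set of
lifts of the point over the dual numbers `K[ε]`) with `⊕ᵢ E_{v_i}/F_{v_i}`,
which has dimension `r(d-r)`. -/
theorem stmt_13 (K : Type*) [Field K] (Vtx Edg : Type*) [Fintype Vtx] [Fintype Edg]
    (src tgt : Edg → Vtx) (d r : ℕ)
    (f : Edg → Matrix (Fin d) (Fin d) K)
    (hconn : ∀ u v : Vtx, ∃ l : List Edg, IsPathTo src tgt u v l)
    (hpre : Prelinked src tgt f)
    -- the simple `K`-point `(F_v)`: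
    (F : Vtx → Submodule K (Fin d → K))
    (hFrank : ∀ v, Module.finrank K (F v) = r)
    (hFlink : ∀ e : Edg, Submodule.map (f e).mulVecLin (F (src e)) ≤ F (tgt e))
    (vsel : Fin r → Vtx) (ssel : Fin r → (Fin d → K))
    (hssel : ∀ i, ssel i ∈ F (vsel i))
    (hsimple : ∀ v : Vtx, ∃ P : Fin r → List Edg,
      (∀ i, IsPathTo src tgt (vsel i) v (P i)) ∧
      LinearIndependent K (fun i => (pathProd f (P i)).mulVec (ssel i)) ∧
      Submodule.span K (Set.range fun i => (pathProd f (P i)).mulVec (ssel i)) = F v) :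
    -- (1) infinitesimal lifting (smoothness):
    (∀ (A : Type*) [CommRing A] [IsLocalRing A] [IsNoetherianRing A] [Algebra K A]
      (ρ : A →+* K), (∀ x : K, ρ (algebraMap K A x) = x) →
      RingHom.ker ρ = IsLocalRing.maximalIdeal A →
      ∀ (I : Ideal A) (hIρ : I ≤ RingHom.ker ρ)
        (𝓕' : Vtx → Submodule (A ⧸ I) (Fin d → A ⧸ I)),
        LGpoint src tgt f (A ⧸ I) 𝓕' →
        (∀ v, redSub (Ideal.Quotient.lift I ρ fun a ha => hIρ ha) (𝓕' v) = F v) →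
        ∃ 𝓕 : Vtx → Submodule A (Fin d → A),
          LGpoint src tgt f A 𝓕 ∧
          ∀ v, redSub (Ideal.Quotient.mk I) (𝓕 v) = 𝓕' v) ∧
    -- (2) the tangent space is `⊕ᵢ E_{v_i}/F_{v_i}`, of dimension `r(d-r)`:
    Nonempty
      ({ 𝓕 : Vtx → Submodule (DualNumber K) (Fin d → DualNumber K) //
          LGpoint src tgt f (DualNumber K) 𝓕 ∧
          ∀ v, redSub (TrivSqZeroExt.fstHom (S := K) (R := K) (M := K)).toRingHom (𝓕 v)
            = F v } ≃
        ((i : Fin r) → (Fin d → K) ⧸ F (vsel i))) ∧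
    (Module.finrank K ((i : Fin r) → (Fin d → K) ⧸ F (vsel i)) = r * (d - r)) :=
  stmt_13_general K Vtx Edg src tgt d r f hconn hpre F hFrank vsel ssel hsimple
end

section
/- Let $\Gamma$ be a finite tree with $T_v \in \mathbb{Z}^{V(\Gamma)}$ as before ($-\ell_v r$ at $v$, $+r$ at neighbors). Fix integers $d_v$, $b \geq 0$, and for $w \in \mathbb{Z}^{V(\Gamma)}$ with $\sum_v w_v = \sum_v d_v - |E(\Gamma)| r b$ and $w_v \equiv d_v \pmod r$, and a pair $(e,v)$ of an edge with adjacent vertex, define $t_{(e,v)}(w) = |S| b - \frac{1}{r} \sum_{v' \in S} (d_{v'} - w_{v'})$ where $S$ is the set of vertices in the connected component of $\Gamma \setminus e$ not containing $v$. Let $\bar{G}$ be the set of such $w$ with $0 \leq t_{(e,v)}(w) \leq b$ for all pairs $(e,v)$. Then for any $w, w' \in \bar{G}$, there exists a minimal path from $w$ to $w'$ (i.e., a sequence of vertices $v_1,\dots,v_m$ of $\Gamma$, not covering all of $V(\Gamma)$, with $w' = w + \sum_i T_{v_i}$) such that every intermediate point $w + T_{v_1} + \dots + T_{v_j}$ lies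 in $\bar{G}$, after suitable reordering of $v_1,\dots,v_m$. -/
open SimpleGraph

/-- For a pair `(e, v)` of an edge with an adjacent vertex, encoded as the
ordered adjacent pair `(v, u)` (so `e = {v,u}`), the set `S` of vertices of the
connected component of `Γ ∖ e` *not* containing `v`, i.e. the component of `u`. -/
noncomputable def sideSet {V : Type*} [Fintype V] (G : SimpleGraph V)
    (v u : V) : Finset V :=
  (Set.toFinite {w | (G.deleteEdges {s(v, u)}).Reachable w u}).toFinset

/-- `r` times the quantity `t_{(e,v)}(w) = |S| b - (1/r) ∑_{v' ∈ S} (d_{v'} - w_{v'})`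
of Notation `twists` (scaled by `r` to stay in `ℤ`). -/
noncomputable def tScaled {V : Type*} [Fintype V] (G : SimpleGraph V)
    (dv : V → ℤ) (b r : ℕ) (w : V → ℤ) (v u : V) : ℤ :=
  (sideSet G v u).card * ((b : ℤ) * r) - ∑ x ∈ sideSet G v u, (dv x - w x)

/-- Membership in `bar G_II`: `0 ≤ t_{(e,v)}(w) ≤ b` for every pair `(e,v)`. -/
def inBarG {V : Type*} [Fintype V] (G : SimpleGraph V)
    (dv : V → ℤ) (b r : ℕ) (w : V → ℤ) : Prop :=
  ∀ v u : V, G.Adj v u →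
    0 ≤ tScaled G dv b r w v u ∧ tScaled G dv b r w v u ≤ (b : ℤ) * r

/-
Write `w' - w = ∑ c_z T_z` with `c ≥ 0` vanishing somewhere: on a tree, `T_z` changes
`t_{(e,v)}` by `±1` exactly when `z` is an endpoint of `e`, so `c_v - c_u` is forced to be
`t_{(e,v)}(w') - t_{(e,v)}(w)` on each edge `e = vu`, and these differences integrate along the
tree. Then apply the `T_z` one at a time. `T_z` keeps us in `Ḡ` unless some edge at `z` is
saturated (`t_{(e,z)} = b`). Among the vertices where `c` is maximal, a saturated edge can only lead
to another maximal vertex (otherwise `w'` would violate `t ≤ b`), and no edge is saturated in both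
directions when `b > 0`; so if every maximal vertex were blocked, each would choose a distinct edge
inside this vertex set, which is impossible in a forest. For `b = 0` every `t` vanishes and `c`
must be constant, hence `0`.
-/

open Finset

namespace SimpleGraph

variable {V : Type*} {G : SimpleGraph V}

lemma Preconnected.apply_eq_of_forall_adj {β : Type*} (hG : G.Preconnected) {f : V → β}
    (hf : ∀ v u, G.Adj v u → f v = f u) (v u : V) : f v = f u := by
  obtain ⟨p⟩ := hG v u
  induction p with
  | nil => rfl
  | cons h _ ih => exact (hf _ _ h).trans ih

lemma Connected.exists_nat_mul_eq_sub [Finite V] (hG : G.Connected) (d : ℕ) (D : V → ℤ)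
    (hD : ∀ v u, G.Adj v u → (d : ℤ) ∣ D v - D u) :
    ∃ c : V → ℕ, (∃ ρ, c ρ = 0) ∧ ∀ v u, ((c v : ℤ) - c u) * d = D v - D u := by
  have := Fintype.ofFinite V
  have := hG.nonempty
  obtain ⟨ρ, -, hρ⟩ := exists_min_image univ D univ_nonempty
  have hdvd (v : V) : (d : ℤ) ∣ D v - D ρ :=
    Int.ModEq.dvd <| hG.preconnected.apply_eq_of_forall_adj (f := fun v => D v % d)
      (fun v u h => Int.modEq_iff_dvd.2 (hD u v h.symm)) ρ v
  have hc (v : V) : (((D v - D ρ) / d).toNat : ℤ) * d = D v - D ρ := by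
    rw [Int.toNat_of_nonneg (Int.ediv_nonneg (sub_nonneg.2 (hρ v (mem_univ _))) d.cast_nonneg),
      Int.ediv_mul_cancel (hdvd v)]
  refine ⟨fun v => ((D v - D ρ) / d).toNat, ⟨ρ, by simp⟩, fun v u => ?_⟩
  rw [sub_mul, hc, hc]
  ring

lemma IsTree.eq_of_adj_of_dist_add_one_eq (hG : G.IsTree) {v u u' x : V} (hu : G.Adj v u)
    (hu' : G.Adj v u') (hd : G.dist u x + 1 = G.dist v x) (hd' : G.dist u' x + 1 = G.dist v x) :
    u = u' := by
  obtain ⟨q, hq⟩ := hG.connected.exists_walk_length_eq_dist u x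
  obtain ⟨q', hq'⟩ := hG.connected.exists_walk_length_eq_dist u' x
  have hp := Walk.isPath_of_length_eq_dist (Walk.cons hu q) (by simp [hq, hd])
  have hp' := Walk.isPath_of_length_eq_dist (Walk.cons hu' q') (by simp [hq', hd'])
  simpa using congrArg (fun p : G.Path v x => p.1.snd)
    ((hG.isAcyclic.subsingleton_path v x).elim ⟨_, hp⟩ ⟨_, hp'⟩)

lemma IsTree.exists_apply_apply_eq [DecidableEq V] (hG : G.IsTree) {M : Finset V}
    (hM : M.Nonempty) {f : V → V} (hf : ∀ z ∈ M, f z ∈ M ∧ G.Adj z (f z)) :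
    ∃ z ∈ M, f (f z) = z := by
  by_contra! hcyc
  obtain ⟨ρ, hρ⟩ := hM
  -- Orient each edge `s(z, f z)` away from `ρ`. Its far end `ch z` determines it, the near end
  -- being the unique neighbour of `ch z` closer to `ρ`; so `ch` injects `M` into `M.erase ρ`.
  have horient : ∀ z ∈ M, ∃ x p, s(z, f z) = s(x, p) ∧ G.dist p ρ + 1 = G.dist x ρ := by
    intro z hz
    rcases hG.dist_eq_dist_add_one_of_adj ρ (hf z hz).2 with h | h <;>
      simp only [dist_comm (u := ρ)] at h
    exacts [⟨z, f z, rfl, h.symm⟩, ⟨f z, z, Sym2.eq_swap, h.symm⟩]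
  choose! ch pa hs hd using horient
  have hadj : ∀ z ∈ M, G.Adj (ch z) (pa z) := fun z hz => by
    rw [← mem_edgeSet, ← hs z hz]
    exact (hf z hz).2
  have hmaps : ∀ z ∈ M, ch z ∈ M.erase ρ := by
    intro z hz
    refine mem_erase.2 ⟨fun h => by simpa [h] using hd z hz, ?_⟩
    rcases Sym2.mem_iff.1 (hs z hz ▸ Sym2.mem_mk_left (ch z) (pa z)) with h | h <;> rw [h]
    exacts [hz, (hf z hz).1]
  have hinj : Set.InjOn ch M := by
    intro z hz z' hz' he
    have hpa : pa z = pa z' := hG.eq_of_adj_of_dist_add_one_eq (hadj z hz) (he ▸ hadj z' hz')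
      (hd z hz) (he ▸ hd z' hz')
    rcases Sym2.eq_iff.1 ((hs z hz).trans (he ▸ hpa ▸ (hs z' hz').symm)) with
      ⟨h, -⟩ | ⟨h1, h2⟩
    · exact h
    · exact absurd (by rw [h2, ← h1]) (hcyc z hz)
  have hcard := card_le_card_of_injOn ch hmaps hinj
  rw [card_erase_of_mem hρ] at hcard
  have := card_pos.2 ⟨ρ, hρ⟩
  omega

section sideSet

variable [Fintype V] {v u x z : V}

@[simp]
lemma mem_sideSet : x ∈ sideSet G v u ↔ (G.deleteEdges {s(v, u)}).Reachable x u := by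
  simp [sideSet]

lemma mem_sideSet_swap : x ∈ sideSet G u v ↔ (G.deleteEdges {s(v, u)}).Reachable x v := by
  rw [mem_sideSet, Sym2.eq_swap]

lemma mem_sideSet_right : u ∈ sideSet G v u :=
  mem_sideSet.2 .rfl

lemma mem_sideSet_iff_of_adj (hxz : G.Adj x z) (hne : s(x, z) ≠ s(v, u)) :
    x ∈ sideSet G v u ↔ z ∈ sideSet G v u := by
  have hadj : (G.deleteEdges {s(v, u)}).Adj x z := deleteEdges_adj.2 ⟨hxz, hne⟩
  simp only [mem_sideSet]
  exact ⟨hadj.symm.reachable.trans, hadj.reachable.trans⟩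

lemma Preconnected.mem_sideSet_or (hG : G.Preconnected) (v u x : V) :
    x ∈ sideSet G v u ∨ x ∈ sideSet G u v := by
  rw [mem_sideSet, mem_sideSet_swap]
  obtain ⟨p⟩ := hG x u
  suffices ∀ {a b : V}, G.Walk a b → b = u →
      (G.deleteEdges {s(v, u)}).Reachable a u ∨ (G.deleteEdges {s(v, u)}).Reachable a v from
    this p rfl
  intro a b p hb
  induction p with
  | nil => exact .inl (hb ▸ .rfl)
  | @cons a c _ hac _ ih =>
    by_cases he : s(a, c) = s(v, u)
    · rcases Sym2.eq_iff.1 he with ⟨rfl, -⟩ | ⟨rfl, -⟩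
      exacts [.inr .rfl, .inl .rfl]
    · have hadj : (G.deleteEdges {s(v, u)}).Adj a c := deleteEdges_adj.2 ⟨hac, he⟩
      exact (ih hb).imp hadj.reachable.trans hadj.reachable.trans

lemma IsAcyclic.disjoint_sideSet (hG : G.IsAcyclic) (h : G.Adj v u) :
    Disjoint (sideSet G v u) (sideSet G u v) := by
  refine Finset.disjoint_left.2 fun x hxu hxv => ?_
  rw [mem_sideSet] at hxu
  rw [mem_sideSet_swap] at hxv
  exact isAcyclic_iff_forall_adj_isBridge.1 hG h (hxv.symm.trans hxu)

lemma IsAcyclic.left_notMem_sideSet (hG : G.IsAcyclic) (h : G.Adj v u) : v ∉ sideSet G v u :=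
  Finset.disjoint_right.1 (hG.disjoint_sideSet h) mem_sideSet_right

lemma IsTree.sum_sideSet_add_sum_sideSet {M : Type*} [AddCommMonoid M] (hG : G.IsTree)
    (h : G.Adj v u) (f : V → M) :
    ∑ x ∈ sideSet G v u, f x + ∑ x ∈ sideSet G u v, f x = ∑ x, f x := by
  classical
  rw [← Finset.sum_union (hG.isAcyclic.disjoint_sideSet h)]
  congr
  ext x
  simpa using hG.connected.preconnected.mem_sideSet_or v u x

lemma IsTree.dist_eq_add_one_of_mem_sideSet (hG : G.IsTree) (h : G.Adj v u)
    (hx : x ∈ sideSet G v u) : G.dist v x = G.dist u x + 1 := by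
  rcases hG.dist_eq_dist_add_one_of_adj x h with hd | hd
  · simpa [dist_comm] using hd
  exfalso
  obtain ⟨p, hp⟩ := hG.connected.exists_walk_length_eq_dist v x
  -- Otherwise a geodesic from `v` to `x` extends to one from `u`, so it avoids `u` and `vu`.
  have hpath : (Walk.cons h.symm p).IsPath :=
    Walk.isPath_of_length_eq_dist _ (by
      rw [Walk.length_cons, hp, dist_comm (u := u), hd, dist_comm])
  have hu : u ∉ p.support := ((Walk.cons_isPath_iff _ _).1 hpath).2
  have he : s(v, u) ∉ p.edges := fun he => hu (p.snd_mem_support_of_mem_edges he)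
  exact hG.isAcyclic.left_notMem_sideSet h
    (mem_sideSet.2 ((p.toDeleteEdge _ he).reachable.trans (mem_sideSet.1 hx)))

lemma IsTree.mem_sideSet_iff_dist (hG : G.IsTree) (h : G.Adj v u) :
    x ∈ sideSet G v u ↔ G.dist v x = G.dist u x + 1 := by
  refine ⟨hG.dist_eq_add_one_of_mem_sideSet h, fun hd => ?_⟩
  refine (hG.connected.preconnected.mem_sideSet_or v u x).resolve_right fun hx => ?_
  have := hG.dist_eq_add_one_of_mem_sideSet h.symm hx
  omega


lemma IsTree.exists_adj_mem_sideSet (hG : G.IsTree) (hxv : x ≠ v) :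
    ∃ u, G.Adj v u ∧ x ∈ sideSet G v u := by
  obtain ⟨p, hp⟩ := hG.connected.exists_walk_length_eq_dist v x
  cases p with
  | nil => exact absurd rfl hxv
  | @cons _ u _ h q =>
    refine ⟨u, h, (hG.mem_sideSet_iff_dist h).2 ?_⟩
    have hq : G.dist u x ≤ q.length := dist_le q
    rw [Walk.length_cons] at hp
    rcases hG.dist_eq_dist_add_one_of_adj x h with hd | hd <;>
      rw [dist_comm (u := x), dist_comm (u := x)] at hd <;> omega

lemma IsTree.exists_sum_sideSet_eq {r : ℕ} (hG : G.IsTree) (y : V → ℤ) (hy : ∑ x, y x = 0)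
    (hdvd : ∀ x, (r : ℤ) ∣ y x) :
    ∃ c : V → ℕ, (∃ ρ, c ρ = 0) ∧
      ∀ v u, G.Adj v u → ∑ x ∈ sideSet G v u, y x = ((c v : ℤ) - c u) * r := by
  -- Crossing the edge `vu` brings every vertex of `S(v,u)` one step closer and moves every
  -- other vertex one step farther.
  let D : V → ℤ := fun v => ∑ x, y x * G.dist v x
  have hD (v u : V) (h : G.Adj v u) : D v - D u = 2 * ∑ x ∈ sideSet G v u, y x := by
    have hnear : ∑ x ∈ sideSet G v u, y x * ((G.dist v x : ℤ) - G.dist u x) =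
        ∑ x ∈ sideSet G v u, y x :=
      sum_congr rfl fun x hx => by rw [hG.dist_eq_add_one_of_mem_sideSet h hx]; push_cast; ring
    have hfar : ∑ x ∈ sideSet G u v, y x * ((G.dist v x : ℤ) - G.dist u x) =
        -∑ x ∈ sideSet G u v, y x := by
      rw [← sum_neg_distrib]
      exact sum_congr rfl fun x hx => by
        rw [hG.dist_eq_add_one_of_mem_sideSet h.symm hx]; push_cast; ring
    have hsplit := hG.sum_sideSet_add_sum_sideSet h fun x => y x * ((G.dist v x : ℤ) - G.dist u x)
    have hy' := hG.sum_sideSet_add_sum_sideSet h y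
    simp only [D, ← sum_sub_distrib, ← mul_sub, ← hsplit, hnear, hfar]
    linarith
  obtain ⟨c, hc0, hc⟩ := hG.connected.exists_nat_mul_eq_sub (2 * r) D fun v u h => by
    rw [hD v u h, Nat.cast_mul, Nat.cast_two]
    exact mul_dvd_mul_left 2 (dvd_sum fun x _ => hdvd x)
  refine ⟨c, hc0, fun v u h => ?_⟩
  have := (hc v u).trans (hD v u h)
  push_cast at this
  linarith

variable [DecidableEq V] [DecidableRel G.Adj]

lemma IsTree.add_sum_sum_sideSet {M : Type*} [AddCommMonoid M] (hG : G.IsTree) (v : V)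
    (f : V → M) :
    f v + ∑ u ∈ G.neighborFinset v, ∑ x ∈ sideSet G v u, f x = ∑ x, f x := by
  have hdisj : (G.neighborFinset v : Set V).PairwiseDisjoint (sideSet G v) := by
    intro a ha b hb hab
    rw [mem_coe, mem_neighborFinset] at ha hb
    refine Finset.disjoint_left.2 fun x hxa hxb => hab ?_
    exact hG.eq_of_adj_of_dist_add_one_eq ha hb ((hG.mem_sideSet_iff_dist ha).1 hxa).symm
      ((hG.mem_sideSet_iff_dist hb).1 hxb).symm
  have hunion : (G.neighborFinset v).biUnion (sideSet G v) = univ.erase v := by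
    ext x
    simp only [mem_biUnion, mem_neighborFinset, mem_erase, mem_univ, and_true]
    constructor
    · rintro ⟨u, hu, hx⟩ rfl
      exact hG.isAcyclic.left_notMem_sideSet hu hx
    · exact hG.exists_adj_mem_sideSet
  rw [← sum_biUnion hdisj, hunion, add_sum_erase _ _ (mem_univ v)]

end sideSet

end SimpleGraph

section translations

variable {V : Type*} [Fintype V] [DecidableEq V] {G : SimpleGraph V} [DecidableRel G.Adj]
  {r : ℕ} {v u : V}

lemma Tvec_apply_s15 (z x : V) :
    Tvec G r z x =
      r * ((if G.Adj z x then 1 else 0) - if x = z then (G.degree z : ℤ) else 0) := by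
  unfold Tvec
  split_ifs <;> simp_all [mul_comm]

lemma Tvec_comm (z x : V) : Tvec G r z x = Tvec G r x z := by
  by_cases h : x = z
  · rw [h]
  · simp [Tvec_apply_s15, h, Ne.symm h, G.adj_comm]

lemma sum_Tvec_mul (z : V) (g : V → ℤ) :
    ∑ x, Tvec G r z x * g x = r * ∑ x ∈ G.neighborFinset z, (g x - g z) := by
  simp only [Tvec_apply_s15, mul_assoc, ← mul_sum, sub_mul, ite_mul, one_mul, zero_mul,
    sum_sub_distrib, sum_ite_eq', mem_univ, if_true, ← sum_filter, ← neighborFinset_eq_filter,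
    sum_const, card_neighborFinset_eq_degree, nsmul_eq_mul]

lemma sum_Tvec (z : V) : ∑ x, Tvec G r z x = 0 := by
  simpa using sum_Tvec_mul (G := G) (r := r) z 1

lemma dvd_Tvec (z x : V) : (r : ℤ) ∣ Tvec G r z x := by
  rw [Tvec_apply_s15]
  exact dvd_mul_right _ _

lemma SimpleGraph.IsTree.sum_sideSet_Tvec (hG : G.IsTree) (h : G.Adj v u) (z : V) :
    ∑ x ∈ sideSet G v u, Tvec G r z x = (if z = v then r else 0) - if z = u then r else 0 := by
  have hS := sum_Tvec_mul (G := G) (r := r) z (fun x => if x ∈ sideSet G v u then 1 else 0)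
  simp only [mul_ite, mul_one, mul_zero, sum_ite_mem, univ_inter] at hS
  rw [hS]
  have hzero : ∀ x ∈ G.neighborFinset z, s(z, x) ≠ s(v, u) →
      ((if x ∈ sideSet G v u then 1 else 0) - if z ∈ sideSet G v u then 1 else 0 : ℤ) = 0 :=
    fun x hx hne => by simp [mem_sideSet_iff_of_adj ((mem_neighborFinset _ _ _).1 hx) hne]
  have hv := hG.isAcyclic.left_notMem_sideSet h
  by_cases hzv : z = v
  · subst hzv
    rw [sum_eq_single_of_mem u ((mem_neighborFinset _ _ _).2 h) fun x hx hxu =>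
      hzero x hx (by simp [hxu, h.ne])]
    simp [hv, h.ne]
  by_cases hzu : z = u
  · subst hzu
    rw [sum_eq_single_of_mem v ((mem_neighborFinset _ _ _).2 h.symm) fun x hx hxv =>
      hzero x hx (by simp [hxv, hzv])]
    simp [hv, hzv]
  · rw [sum_eq_zero fun x hx => hzero x hx (by simp [hzv, hzu])]
    simp [hzv, hzu]

def Tcomb (G : SimpleGraph V) [DecidableRel G.Adj] (r : ℕ) (c : V → ℕ) : V → ℤ :=
  ∑ z, (c z : ℤ) • Tvec G r z

lemma Tcomb_apply (c : V → ℕ) (v : V) :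
    Tcomb G r c v = r * ∑ u ∈ G.neighborFinset v, ((c u : ℤ) - c v) := by
  simp only [Tcomb, Finset.sum_apply, Pi.smul_apply, smul_eq_mul, Tvec_comm _ v,
    mul_comm (c _ : ℤ)]
  exact sum_Tvec_mul v _

lemma Tcomb_add (c c' : V → ℕ) : Tcomb G r (c + c') = Tcomb G r c + Tcomb G r c' := by
  simp [Tcomb, add_smul, sum_add_distrib]

lemma Tcomb_single (z : V) : Tcomb G r (Pi.single z 1) = Tvec G r z := by
  simp [Tcomb, Pi.single_apply]

lemma SimpleGraph.IsTree.sum_sideSet_Tcomb (hG : G.IsTree) (h : G.Adj v u) (c : V → ℕ) :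
    ∑ x ∈ sideSet G v u, Tcomb G r c x = ((c v : ℤ) - c u) * r := by
  simp [Tcomb, Finset.sum_apply, sum_comm (s := sideSet G v u), ← mul_sum, hG.sum_sideSet_Tvec h,
    mul_sub, sub_mul]

lemma SimpleGraph.IsTree.exists_Tcomb_eq (hG : G.IsTree) (y : V → ℤ) (hy : ∑ x, y x = 0)
    (hdvd : ∀ x, (r : ℤ) ∣ y x) :
    ∃ c : V → ℕ, (∃ ρ, c ρ = 0) ∧ Tcomb G r c = y := by
  obtain ⟨c, hc0, hc⟩ := hG.exists_sum_sideSet_eq y hy hdvd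
  refine ⟨c, hc0, funext fun v => ?_⟩
  have hv := hG.add_sum_sum_sideSet v y
  rw [hy, sum_congr rfl fun u hu => hc v u ((mem_neighborFinset _ _ _).1 hu)] at hv
  calc Tcomb G r c v = r * ∑ u ∈ G.neighborFinset v, ((c u : ℤ) - c v) := Tcomb_apply c v
    _ = -∑ u ∈ G.neighborFinset v, ((c v : ℤ) - c u) * r := by
      rw [mul_sum, ← sum_neg_distrib]
      exact sum_congr rfl fun _ _ => by ring
    _ = y v := by linarith

end translations

section barG

variable {V : Type*} [Fintype V] {G : SimpleGraph V} {dv : V → ℤ} {b r : ℕ} {w : V → ℤ}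
  {c : V → ℕ} {v u z : V}

lemma tScaled_add (w x : V → ℤ) (v u : V) :
    tScaled G dv b r (w + x) v u = tScaled G dv b r w v u + ∑ a ∈ sideSet G v u, x a := by
  simp only [tScaled, Pi.add_apply, sub_add_eq_sub_sub, sum_sub_distrib]
  ring

lemma dvd_tScaled (hcong : ∀ a, (r : ℤ) ∣ dv a - w a) (v u : V) :
    (r : ℤ) ∣ tScaled G dv b r w v u :=
  dvd_sub ((dvd_mul_left _ _).mul_left _) (dvd_sum fun a _ => hcong a)

variable [DecidableRel G.Adj]

lemma SimpleGraph.IsTree.tScaled_add_tScaled (hG : G.IsTree) (h : G.Adj v u)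
    (hsum : ∑ a, w a = ∑ a, dv a - G.edgeFinset.card * r * b) :
    tScaled G dv b r w v u + tScaled G dv b r w u v = b * r := by
  have hcard := hG.sum_sideSet_add_sum_sideSet h fun _ => (1 : ℤ)
  have hdiff := hG.sum_sideSet_add_sum_sideSet h fun a => dv a - w a
  have hE : (G.edgeFinset.card : ℤ) + 1 = Fintype.card V := by exact_mod_cast hG.card_edgeFinset
  simp only [sum_const, nsmul_eq_mul, mul_one, card_univ] at hcard
  simp only [sum_sub_distrib] at hdiff
  rw [hsum] at hdiff
  simp only [tScaled, sum_sub_distrib]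
  linear_combination (b * r : ℤ) * hcard - hdiff - (b * r : ℤ) * hE

variable [DecidableEq V]

lemma SimpleGraph.IsTree.inBarG_add_Tvec (hG : G.IsTree)
    (hsum : ∑ a, w a = ∑ a, dv a - G.edgeFinset.card * r * b) (hw : inBarG G dv b r w)
    (hz : ∀ u, G.Adj z u → tScaled G dv b r w z u + r ≤ b * r) :
    inBarG G dv b r (w + Tvec G r z) := by
  intro v u h
  rw [tScaled_add, hG.sum_sideSet_Tvec h]
  obtain ⟨hlo, hhi⟩ := hw v u h
  rcases eq_or_ne z v with rfl | hzv
  · have := hz u h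
    rw [if_pos rfl, if_neg h.ne]
    constructor <;> push_cast <;> linarith
  rcases eq_or_ne z u with rfl | hzu
  · have := hz v h.symm
    have := hG.tScaled_add_tScaled h hsum
    rw [if_neg hzv, if_pos rfl]
    constructor <;> push_cast <;> linarith
  · simpa [hzv, hzu] using hw v u h

lemma SimpleGraph.IsTree.exists_tScaled_add_le (hG : G.IsTree) (hr : 0 < r) (hb : 0 < b)
    (hsum : ∑ a, w a = ∑ a, dv a - G.edgeFinset.card * r * b)
    (hcong : ∀ a, (r : ℤ) ∣ dv a - w a) (hw : inBarG G dv b r w)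
    (hw' : inBarG G dv b r (w + Tcomb G r c)) (hpos : ∃ v, 0 < c v) :
    ∃ z, 0 < c z ∧ ∀ u, G.Adj z u → tScaled G dv b r w z u + r ≤ b * r := by
  by_contra! hbad
  obtain ⟨v₀, hv₀⟩ := hpos
  set M := univ.filter fun z => c z = univ.sup c
  -- At a maximum of `c`, a blocking edge is saturated (by divisibility) and, because of `hw'`,
  -- leads to another maximum.
  have hsat : ∀ z ∈ M, ∃ t ∈ M, G.Adj z t ∧ tScaled G dv b r w z t = b * r := by
    intro z hz
    simp only [M, mem_filter, mem_univ, true_and] at hz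
    obtain ⟨t, ht, hlt⟩ := hbad z (hz ▸ hv₀.trans_le (le_sup (mem_univ v₀)))
    have htop : tScaled G dv b r w z t = b * r := by
      have := Int.eq_zero_of_dvd_of_nonneg_of_lt (sub_nonneg.2 (hw z t ht).2) (by linarith)
        (dvd_sub (dvd_mul_left _ _) (dvd_tScaled hcong z t))
      linarith
    have hle := (hw' z t ht).2
    rw [tScaled_add, hG.sum_sideSet_Tcomb ht, htop] at hle
    have hct : c z ≤ c t := by
      have : ((c z : ℤ) - c t) * r ≤ 0 := by linarith
      exact_mod_cast sub_nonpos.1 (nonpos_of_mul_nonpos_left this (by exact_mod_cast hr))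
    refine ⟨t, ?_, ht, htop⟩
    simpa [M] using le_antisymm (le_sup (mem_univ t)) (hz ▸ hct)
  choose! f hfM hfadj hftop using hsat
  obtain ⟨z₀, -, hz₀⟩ := exists_mem_eq_sup univ ⟨v₀, mem_univ _⟩ c
  obtain ⟨z, hz, hff⟩ := hG.exists_apply_apply_eq ⟨z₀, by simp [M, hz₀]⟩
    fun z hz => ⟨hfM z hz, hfadj z hz⟩
  have hback := hftop _ (hfM z hz)
  rw [hff] at hback
  have := hG.tScaled_add_tScaled (hfadj z hz) hsum
  have : 0 < (b * r : ℤ) := by positivity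
  linarith [hftop z hz]

lemma SimpleGraph.IsTree.apply_eq_of_inBarG_zero (hG : G.IsTree) (hr : 0 < r)
    (hw : inBarG G dv 0 r w) (hw' : inBarG G dv 0 r (w + Tcomb G r c)) (v u : V) :
    c v = c u := by
  refine hG.connected.preconnected.apply_eq_of_forall_adj (fun v u h => ?_) v u
  have h₀ := hw v u h
  have h₁ := hw' v u h
  rw [tScaled_add, hG.sum_sideSet_Tcomb h] at h₁
  simp only [Nat.cast_zero, zero_mul] at h₀ h₁
  have : ((c v : ℤ) - c u) * r = 0 := by linarith
  rcases mul_eq_zero.1 this with h | h <;> omega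

lemma SimpleGraph.IsTree.exists_inBarG_add_Tvec (hG : G.IsTree) (hr : 0 < r)
    (hsum : ∑ a, w a = ∑ a, dv a - G.edgeFinset.card * r * b)
    (hcong : ∀ a, (r : ℤ) ∣ dv a - w a) (hw : inBarG G dv b r w)
    (hw' : inBarG G dv b r (w + Tcomb G r c)) (h0 : ∃ v, c v = 0) (hpos : ∃ v, 0 < c v) :
    ∃ z, 0 < c z ∧ inBarG G dv b r (w + Tvec G r z) := by
  rcases Nat.eq_zero_or_pos b with rfl | hb
  · obtain ⟨ρ, hρ⟩ := h0
    obtain ⟨v, hv⟩ := hpos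
    have := hG.apply_eq_of_inBarG_zero hr hw hw' v ρ
    omega
  · obtain ⟨z, hz, hgood⟩ := hG.exists_tScaled_add_le hr hb hsum hcong hw hw' hpos
    exact ⟨z, hz, hG.inBarG_add_Tvec hsum hw hgood⟩

lemma inBarG_take_cons (hw : inBarG G dv b r w) {z : V} {l : List V}
    (hl : ∀ n, inBarG G dv b r (w + Tvec G r z + ((l.take n).map (Tvec G r)).sum)) :
    ∀ n, inBarG G dv b r (w + (((z :: l).take n).map (Tvec G r)).sum)
  | 0 => by simpa using hw
  | n + 1 => by simpa [add_assoc] using hl n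

lemma SimpleGraph.IsTree.exists_list_of_inBarG_add_Tcomb (hG : G.IsTree) (hr : 0 < r) {N : ℕ}
    (hN : ∑ v, c v = N) (hsum : ∑ a, w a = ∑ a, dv a - G.edgeFinset.card * r * b)
    (hcong : ∀ a, (r : ℤ) ∣ dv a - w a) (hw : inBarG G dv b r w)
    (hw' : inBarG G dv b r (w + Tcomb G r c)) (h0 : ∃ v, c v = 0) :
    ∃ l : List V, (∀ v ∈ l, 0 < c v) ∧ (l.map (Tvec G r)).sum = Tcomb G r c ∧
      ∀ n, inBarG G dv b r (w + ((l.take n).map (Tvec G r)).sum) := by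
  induction N generalizing w c with
  | zero =>
    obtain rfl : c = 0 := funext fun v => (sum_eq_zero_iff.1 hN) v (mem_univ v)
    exact ⟨[], by simp, by simp [Tcomb], by simpa using hw⟩
  | succ N ih =>
    have hpos : ∃ v, 0 < c v := by
      by_contra! h
      simp [Nat.le_zero.1 (h _)] at hN
    obtain ⟨z, hz, hwz⟩ := hG.exists_inBarG_add_Tvec hr hsum hcong hw hw' h0 hpos
    set c₁ := Function.update c z (c z - 1)
    have hc : c = c₁ + Pi.single z 1 := by
      ext v
      rcases eq_or_ne v z with rfl | hvz
      · simp [c₁]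
        omega
      · simp [c₁, hvz]
    have hc₁ (v : V) : c₁ v ≤ c v := by rw [hc]; simp
    rw [hc, Tcomb_add, Tcomb_single] at hw'
    obtain ⟨l, hl, hlsum, hlpath⟩ := ih (w := w + Tvec G r z) (c := c₁)
      (by rw [hc] at hN; simpa [sum_add_distrib] using hN)
      (by simp [sum_add_distrib, sum_Tvec, hsum])
      (fun a => by simpa [sub_add_eq_sub_sub] using dvd_sub (hcong a) (dvd_Tvec z a))
      hwz (by rwa [add_assoc, add_comm (Tvec G r z)])
      (h0.imp fun v hv => Nat.eq_zero_of_le_zero ((hc₁ v).trans_eq hv))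
    refine ⟨z :: l, ?_, ?_, inBarG_take_cons hw hlpath⟩
    · simpa [hz] using fun v hv => (hl v hv).trans_le (hc₁ v)
    · rw [List.map_cons, List.sum_cons, hlsum, hc, Tcomb_add, Tcomb_single, add_comm]

end barG

/-- Proposition `type-ii-min-paths`: for any `w, w'` in
`bar G_II`, there exists a minimal path from `w` to `w'` (a sequence of vertices
`v₁,…,v_m` not covering all of `V(Γ)` with `w' = w + ∑ T_{vᵢ}`) all of whose
intermediate points lie in `bar G_II`. -/
theorem stmt_15 {V : Type*} [Fintype V] [DecidableEq V] (G : SimpleGraph V)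
    [DecidableRel G.Adj] (hG : G.IsTree) (r b : ℕ) (hr : 0 < r)
    (dv : V → ℤ) (w w' : V → ℤ)
    (hsum : ∑ v, w v = ∑ v, dv v - G.edgeFinset.card * r * b)
    (hsum' : ∑ v, w' v = ∑ v, dv v - G.edgeFinset.card * r * b)
    (hcong : ∀ v, (r : ℤ) ∣ (dv v - w v)) (hcong' : ∀ v, (r : ℤ) ∣ (dv v - w' v))
    (hw : inBarG G dv b r w) (hw' : inBarG G dv b r w') :
    ∃ l : List V, (∃ v : V, v ∉ l) ∧
      w' = w + (l.map (Tvec G r)).sum ∧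
      ∀ n : ℕ, inBarG G dv b r (w + ((l.take n).map (Tvec G r)).sum) := by
  obtain ⟨c, ⟨ρ, hρ⟩, hc⟩ := hG.exists_Tcomb_eq (w' - w)
    (by simp [sum_sub_distrib, hsum, hsum'])
    (fun v => by simpa using dvd_sub (hcong v) (hcong' v))
  have hw'' : inBarG G dv b r (w + Tcomb G r c) := by rwa [hc, add_sub_cancel]
  obtain ⟨l, hl, hlsum, hpath⟩ :=
    hG.exists_list_of_inBarG_add_Tcomb hr rfl hsum hcong hw hw'' ⟨ρ, hρ⟩
  exact ⟨l, ⟨ρ, fun h => (hl ρ h).ne' hρ⟩, by rw [hlsum, hc, add_sub_cancel], hpath⟩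
end

section
/- Let $V^1, V^2$ be $k$-dimensional vector spaces with decreasing exhaustive filtrations $V^1(-jP)$ and $V^2(-jQ)$ (indexed by $j \geq 0$) with vanishing sequences $a^1_1 \leq \dots \leq a^1_k$ and $a^2_1 \leq \dots \leq a^2_k$, and for each $j$ with $0 \leq j \leq b$ let $\phi_j: V^1(-jP) \oplus V^2(-(b-j)Q) \to L_j$ be the difference of the two evaluation maps to the fiber $L_j$ at the node. If for all $0 \leq j \leq b$, $\dim V^1(-jP) + \dim V^2(-(b-j)Q) - \mathrm{rank}(\phi_j) \geq k$, then for every $i$, $a^1_i + a^2_{k+1-i} \geq b$. -/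
set_option synthInstance.maxHeartbeats 1000000
set_option maxHeartbeats 1000000


/-- the two-component case of Lemma `teixidor-translate`,
direction (b) ⇒ (a), abstract formulation: `V¹, V²` are `k`-dimensional spaces
with decreasing exhaustive filtrations (orders of vanishing at the node) with
vanishing sequences `a¹` and `a²`, and for each `0 ≤ j ≤ b` a gluing map
`φⱼ : V¹ × V² → Lⱼ` whose restrictions to the summands `V¹(-jΔ')` and
`V²(-(b-j)Δ')` have kernels `V¹(-(j+1)Δ')` and `V²(-(b-j+1)Δ')` respectively.
If for every `j` the kernel of `φⱼ` restricted to `V¹(-jΔ') × V²(-(b-j)Δ')` has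
dimension at least `k`, then `a¹ᵢ + a²_{k+1-i} ≥ b` for every `i`. -/
theorem stmt_16 (K V₁ V₂ : Type*) [Field K]
    [AddCommGroup V₁] [Module K V₁] [AddCommGroup V₂] [Module K V₂]
    [FiniteDimensional K V₁] [FiniteDimensional K V₂]
    (k b : ℕ) (hk1 : Module.finrank K V₁ = k) (hk2 : Module.finrank K V₂ = k)
    (F₁ : ℕ → Submodule K V₁) (F₂ : ℕ → Submodule K V₂)
    (hF1top : F₁ 0 = ⊤) (hF2top : F₂ 0 = ⊤)
    (hF1mono : Antitone F₁) (hF2mono : Antitone F₂)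
    (hF1bot : ∃ N, F₁ N = ⊥) (hF2bot : ∃ N, F₂ N = ⊥)
    (a₁ a₂ : Fin k → ℕ) (ha1mono : Monotone a₁) (ha2mono : Monotone a₂)
    (ha1 : ∀ m : ℕ, (Finset.univ.filter fun i : Fin k => m ≤ a₁ i).card
        = Module.finrank K (F₁ m))
    (ha2 : ∀ m : ℕ, (Finset.univ.filter fun i : Fin k => m ≤ a₂ i).card
        = Module.finrank K (F₂ m))
    (L : ℕ → Type*) [∀ j, AddCommGroup (L j)] [∀ j, Module K (L j)]
    (φ : (j : ℕ) → (V₁ × V₂) →ₗ[K] L j)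
    (hker1 : ∀ j ≤ b, ∀ x ∈ F₁ j, (φ j (x, 0) = 0 ↔ x ∈ F₁ (j + 1)))
    (hker2 : ∀ j ≤ b, ∀ y ∈ F₂ (b - j), (φ j (0, y) = 0 ↔ y ∈ F₂ (b - j + 1)))
    (hmain : ∀ j ≤ b,
      k ≤ Module.finrank K ↥((F₁ j).prod (F₂ (b - j)) ⊓ LinearMap.ker (φ j))) :
    ∀ i : Fin k, b ≤ a₁ i + a₂ i.rev := by
  intro i
  by_contra hcon
  push_neg at hcon
  have hjb : a₁ i ≤ b := by omega
  set j := a₁ i with hj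
  set W := (F₁ j).prod (F₂ (b - j)) ⊓ LinearMap.ker (φ j) with hWdef
  have hW : k ≤ Module.finrank K W := hmain j hjb
  let f : W →ₗ[K] V₂ := (LinearMap.snd K V₁ V₂).comp W.subtype
  have hrank := LinearMap.finrank_range_add_finrank_ker f
  have hrangele : Module.finrank K (LinearMap.range f) ≤ Module.finrank K (F₂ (b - j)) := by
    apply Submodule.finrank_mono
    rintro _ ⟨⟨⟨x, y⟩, hxy⟩, rfl⟩
    exact hxy.1.2
  let g : LinearMap.ker f →ₗ[K] V₁ :=
    (LinearMap.fst K V₁ V₂).comp (W.subtype.comp (LinearMap.ker f).subtype)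
  have hsnd : ∀ u : LinearMap.ker f, (u.1.1 : V₁ × V₂).2 = 0 := fun u => u.2
  have hginj : Function.Injective g := by
    intro u v huv
    ext
    · exact huv
    · rw [hsnd u, hsnd v]
  have hgrange : LinearMap.range g ≤ F₁ (j + 1) := by
    rintro _ ⟨u, rfl⟩
    have hx1 : (u.1.1 : V₁ × V₂).1 ∈ F₁ j := u.1.2.1.1
    have hker : φ j ((u.1.1 : V₁ × V₂).1, 0) = 0 := by
      have h0 : φ j (u.1.1 : V₁ × V₂) = 0 :=
        LinearMap.mem_ker.mp (Submodule.mem_inf.mp u.1.2).2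
      have heq : ((u.1.1 : V₁ × V₂).1, (0 : V₂)) = (u.1.1 : V₁ × V₂) := by
        rw [← hsnd u]
      rw [heq, h0]
    exact (hker1 j hjb _ hx1).mp hker
  have hkerle : Module.finrank K (LinearMap.ker f) ≤ Module.finrank K (F₁ (j + 1)) := by
    rw [← LinearMap.finrank_range_of_inj hginj]
    exact Submodule.finrank_mono hgrange
  -- cardinality bounds
  have hb1 : Module.finrank K (F₁ (j + 1)) ≤ k - 1 - i := by
    rw [← ha1]
    calc (Finset.univ.filter fun ℓ : Fin k => j + 1 ≤ a₁ ℓ).card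
        ≤ (Finset.Ioi i).card := by
          apply Finset.card_le_card
          intro ℓ hℓ
          simp only [Finset.mem_filter] at hℓ
          rw [Finset.mem_Ioi]
          by_contra hle
          push_neg at hle
          have h2 := hℓ.2
          have h3 := ha1mono hle
          omega
      _ = k - 1 - i := by rw [Fin.card_Ioi]
  have hb2 : Module.finrank K (F₂ (b - j)) ≤ (i : ℕ) := by
    rw [← ha2]
    calc (Finset.univ.filter fun ℓ : Fin k => b - j ≤ a₂ ℓ).card
        ≤ (Finset.Ioi i.rev).card := by
          apply Finset.card_le_card
          intro ℓ hℓ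
          simp only [Finset.mem_filter] at hℓ
          rw [Finset.mem_Ioi]
          by_contra hle
          push_neg at hle
          have h2 := hℓ.2
          have h3 := ha2mono hle
          omega
      _ = (i : ℕ) := by
          rw [Fin.card_Ioi]
          have : (i.rev : ℕ) = k - 1 - i := by
            rw [Fin.val_rev]; omega
          omega
  have hik : (i : ℕ) < k := i.2
  omega
end
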